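/- arXiv:2411.10733 — 6 statements merged into one kernel-verified Lean document; each statement's English description precedes it below -/
import Mathlib

section
/- Let f ∈ ℚ((z⁻¹)) be a formal Laurent series that is not a rational function. Define a_0 = ⌊f⌋ (the polynomial part of f), f_1 = (f - a_0)^{-1}, and inductively a_n = ⌊f_n⌋, f_{n+1} = (f_n - a_n)^{-1}. Then f_n is well-defined (f_n ≠ a_n) for all n ≥ 1, deg(a_n) ≥ 1 for n ≥ 1, and the convergents p_n/q_n of [a_0, a_1, a_2, ...] converge to f in the metric on ℚ((z⁻¹)). -/
/-!
Polynomial parts are polynomials in `z` and rational functions form a subfield of `ℚ((z⁻¹))`,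
so if some `fₙ` were rational (e.g. equal to its polynomial part), unwinding
`fₖ = aₖ + 1 / fₖ₊₁` would make `f` rational. As `fₙ - aₙ` has negative degree, `fₙ₊₁` and
`aₙ₊₁ = ⌊fₙ₊₁⌋` have degree at least one, hence `deg qₙ ≥ n`. The identities
`f (fₙ₊₁qₙ + qₙ₋₁) = fₙ₊₁pₙ + pₙ₋₁` and `pₙqₙ₋₁ - pₙ₋₁qₙ = ±1` give
`f - pₙ/qₙ = ∓1 / (qₙ (fₙ₊₁qₙ + qₙ₋₁))`, of degree `-(2 deg qₙ + deg fₙ₊₁) < -n`.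
-/

noncomputable section
open Classical Polynomial

/-- The space ℚ((z⁻¹)) of formal Laurent series over ℚ (variable X = z⁻¹). -/
abbrev LS := LaurentSeries ℚ

/-- Degree of a formal Laurent series in z (minus the order in X = z⁻¹). -/
def ldeg (f : LS) : ℤ := -f.order

/-- The metric d(f,g) = 2^{deg(f-g)} for f ≠ g, and 0 otherwise. -/
def Dmet (f g : LS) : ℝ := if f = g then 0 else (2 : ℝ) ^ ldeg (f - g)

/-- The element z of ℚ((z⁻¹)): the series X⁻¹ where X = z⁻¹. -/
def Zl : LS := HahnSeries.single (-1 : ℤ) (1 : ℚ)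

/-- The polynomial part ⌊f⌋ of a formal Laurent series: the terms with
nonnegative powers of z, i.e. nonpositive exponents of X = z⁻¹. -/
def polyPart (f : LS) : LS :=
  ⟨fun n => if n ≤ 0 then f.coeff n else 0, by
    refine f.isPWO_support'.mono fun n hn => ?_
    simp only [Function.mem_support] at hn ⊢
    intro h; apply hn; split <;> simp [h]⟩

/-- f is a rational function, i.e. a quotient of two polynomials in ℚ[z]. -/
def IsRatFn (f : LS) : Prop :=
  ∃ P Q : Polynomial ℚ, Q ≠ 0 ∧ f * Polynomial.aeval Zl Q = Polynomial.aeval Zl P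

/-- The sequence f₀ = f, f_{n+1} = (fₙ - ⌊fₙ⌋)⁻¹ of the continued fraction
algorithm; the partial quotients are aₙ = ⌊fₙ⌋. -/
def Fseq (f : LS) : ℕ → LS
  | 0 => f
  | n + 1 => (Fseq f n - polyPart (Fseq f n))⁻¹

/-- Continued fraction numerators: p₀ = a₀, p₁ = a₁a₀ + 1, pₙ = aₙpₙ₋₁ + pₙ₋₂. -/
def cfP (a : ℕ → LS) : ℕ → LS
  | 0 => a 0
  | 1 => a 1 * a 0 + 1
  | n + 2 => a (n + 2) * cfP a (n + 1) + cfP a n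

/-- Continued fraction denominators: q₀ = 1, q₁ = a₁, qₙ = aₙqₙ₋₁ + qₙ₋₂. -/
def cfQ (a : ℕ → LS) : ℕ → LS
  | 0 => 1
  | 1 => a 1
  | n + 2 => a (n + 2) * cfQ a (n + 1) + cfQ a n

section Continuants

variable {R : Type*} [CommRing R]

/- `contNum a n` and `contDen a n` are `pₙ₋₁` and `qₙ₋₁`, so that the seeds `p₋₁ = 1`, `q₋₁ = 0`
sit at index `0`. -/
def contNum (a : ℕ → R) : ℕ → R
  | 0 => 1
  | 1 => a 0
  | n + 2 => a (n + 1) * contNum a (n + 1) + contNum a n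

def contDen (a : ℕ → R) : ℕ → R
  | 0 => 0
  | 1 => 1
  | n + 2 => a (n + 1) * contDen a (n + 1) + contDen a n

theorem contNum_mul_contDen_sub (a : ℕ → R) (n : ℕ) :
    contNum a (n + 1) * contDen a n - contNum a n * contDen a (n + 1) = (-1) ^ (n + 1) := by
  induction n with
  | zero => simp [contNum, contDen]
  | succ n ih => rw [contNum, contDen, pow_succ, ← ih]; ring

/- `F` plays the complete quotients: `F n = a n + 1 / F (n + 1)`, so `F 0` is the value of
`[a₀; a₁, …, aₙ, F (n + 1)]`. -/
theorem eq_complete_convergent {F a : ℕ → R} (hF : ∀ n, F (n + 1) * (F n - a n) = 1) (n : ℕ) :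
    F 0 * (F (n + 1) * contDen a (n + 1) + contDen a n) =
      F (n + 1) * contNum a (n + 1) + contNum a n := by
  induction n with
  | zero => simp only [contNum, contDen]; linear_combination hF 0
  | succ n ih =>
    rw [contNum, contDen]
    linear_combination F (n + 2) * ih - (F 0 * contDen a (n + 1) - contNum a (n + 1)) * hF (n + 1)

theorem contNum_sub_mul_contDen_mul {F a : ℕ → R} (hF : ∀ n, F (n + 1) * (F n - a n) = 1)
    (n : ℕ) :
    (contNum a (n + 1) - F 0 * contDen a (n + 1)) * (F (n + 1) * contDen a (n + 1) + contDen a n) =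
      (-1) ^ (n + 1) := by
  linear_combination contNum_mul_contDen_sub a n - contDen a (n + 1) * eq_complete_convergent hF n

end Continuants

theorem cfP_eq_contNum (a : ℕ → LS) : ∀ n, cfP a n = contNum a (n + 1)
  | 0 => rfl
  | 1 => rfl
  | n + 2 => by rw [cfP, cfP_eq_contNum a (n + 1), cfP_eq_contNum a n]; rfl

theorem cfQ_eq_contDen (a : ℕ → LS) : ∀ n, cfQ a n = contDen a (n + 1)
  | 0 => rfl
  | 1 => by simp [cfQ, contDen]
  | n + 2 => by rw [cfQ, cfQ_eq_contDen a (n + 1), cfQ_eq_contDen a n]; rfl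

section Degree

theorem ne_zero_of_ldeg_ne_zero {x : LS} (h : ldeg x ≠ 0) : x ≠ 0 := by
  rintro rfl
  simp [ldeg] at h

theorem ldeg_neg (x : LS) : ldeg (-x) = ldeg x := by
  simp [ldeg]

theorem ldeg_neg_one_pow (n : ℕ) : ldeg ((-1) ^ n) = 0 := by
  simp [ldeg]

theorem ldeg_mul {x y : LS} (hx : x ≠ 0) (hy : y ≠ 0) : ldeg (x * y) = ldeg x + ldeg y := by
  simp only [ldeg, HahnSeries.order_mul hx hy]
  ring

theorem ldeg_inv (x : LS) : ldeg x⁻¹ = -ldeg x := by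
  rcases eq_or_ne x 0 with rfl | hx
  · simp [ldeg]
  have h := ldeg_mul hx (inv_ne_zero hx)
  rw [mul_inv_cancel₀ hx, show ldeg 1 = 0 by simp [ldeg]] at h
  omega

theorem ldeg_add_eq_left {x y : LS} (hx : x ≠ 0) (h : ldeg y < ldeg x) :
    ldeg (x + y) = ldeg x := by
  have hlt : x.orderTop < y.orderTop := by
    rcases eq_or_ne y 0 with rfl | hy
    · simpa using hx
    rw [← HahnSeries.order_eq_orderTop_of_ne_zero hx, ← HahnSeries.order_eq_orderTop_of_ne_zero hy]
    simp only [ldeg] at h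
    exact_mod_cast (by omega : x.order < y.order)
  have htop := HahnSeries.orderTop_add_eq_left hlt
  have hxy : x + y ≠ 0 := by
    rw [← HahnSeries.orderTop_ne_top, htop, HahnSeries.orderTop_ne_top]; exact hx
  rw [← HahnSeries.order_eq_orderTop_of_ne_zero hx, ← HahnSeries.order_eq_orderTop_of_ne_zero hxy]
    at htop
  simp only [ldeg, WithTop.coe_inj.mp htop]

theorem ldeg_mul_add_of_le {c x y : LS} (hc : 1 ≤ ldeg c) (hx : x ≠ 0) (hy : ldeg y ≤ ldeg x) :
    ldeg (c * x + y) = ldeg c + ldeg x := by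
  have hc0 := ne_zero_of_ldeg_ne_zero (by omega : ldeg c ≠ 0)
  rw [ldeg_add_eq_left (mul_ne_zero hc0 hx) (by rw [ldeg_mul hc0 hx]; omega), ldeg_mul hc0 hx]

theorem Dmet_le_zpow_ldeg_sub (x y : LS) : Dmet x y ≤ 2 ^ ldeg (x - y) := by
  unfold Dmet
  split_ifs
  · positivity
  · rfl

end Degree

section PolyPart

theorem coeff_polyPart (x : LS) (n : ℤ) :
    (polyPart x).coeff n = if n ≤ 0 then x.coeff n else 0 := rfl

theorem ldeg_sub_polyPart_neg {x : LS} (h : x ≠ polyPart x) : ldeg (x - polyPart x) < 0 := by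
  have hne : x - polyPart x ≠ 0 := sub_ne_zero.2 h
  have : 1 ≤ (x - polyPart x).order :=
    (HahnSeries.le_order_iff_forall hne).2 fun j hj => by
      simp [coeff_polyPart, show j ≤ 0 by omega]
  simp only [ldeg]
  omega

theorem ldeg_polyPart {x : LS} (hx : 0 < ldeg x) : ldeg (polyPart x) = ldeg x := by
  by_cases h : x = polyPart x
  · rw [← h]
  have := ldeg_add_eq_left (ne_zero_of_ldeg_ne_zero hx.ne') (y := -(x - polyPart x))
    (by rw [ldeg_neg]; linarith [ldeg_sub_polyPart_neg h])
  rwa [neg_sub, add_sub_cancel] at this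

end PolyPart

section RatFn

theorem Zl_pow (k : ℕ) : Zl ^ k = HahnSeries.single (-(k : ℤ)) (1 : ℚ) := by
  rw [Zl, HahnSeries.single_pow, one_pow, nsmul_eq_mul, mul_neg_one]

theorem aeval_Zl_eq_sum (P : ℚ[X]) :
    aeval Zl P = ∑ k ∈ P.support, HahnSeries.single (-(k : ℤ)) (P.coeff k) := by
  simp only [aeval_def, eval₂_eq_sum, Polynomial.sum_def, Zl_pow]
  refine Finset.sum_congr rfl fun k _ => ?_
  -- `algebraMap ℚ LS` is the `ℚ`-algebra structure of a characteristic-zero field, not `C`.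
  rw [RingHom.ext_rat (algebraMap ℚ LS) HahnSeries.C, HahnSeries.C_apply,
    HahnSeries.single_mul_single, zero_add, mul_one]

theorem coeff_aeval_Zl_neg (P : ℚ[X]) (k : ℕ) : (aeval Zl P).coeff (-k) = P.coeff k := by
  rw [aeval_Zl_eq_sum, HahnSeries.coeff_sum]
  simp only [HahnSeries.coeff_single, neg_inj, Nat.cast_inj, Finset.sum_ite_eq, mem_support_iff,
    ite_not, ite_eq_right_iff]
  exact Eq.symm

theorem coeff_aeval_Zl_of_pos (P : ℚ[X]) {n : ℤ} (hn : 0 < n) : (aeval Zl P).coeff n = 0 := by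
  rw [aeval_Zl_eq_sum, HahnSeries.coeff_sum]
  exact Finset.sum_eq_zero fun k _ => by rw [HahnSeries.coeff_single, if_neg (by omega)]

theorem aeval_Zl_injective : Function.Injective (aeval Zl : ℚ[X] → LS) := by
  refine (injective_iff_map_eq_zero _).2 fun P hP => Polynomial.ext fun k => ?_
  rw [← coeff_aeval_Zl_neg, hP, HahnSeries.coeff_zero, coeff_zero]

theorem polyPart_eq_aeval (x : LS) :
    polyPart x = aeval Zl (∑ k ∈ Finset.range ((-x.order).toNat + 1), monomial k (x.coeff (-k))) := by
  ext n
  rcases lt_or_ge 0 n with hn | hn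
  · rw [coeff_aeval_Zl_of_pos _ hn, coeff_polyPart, if_neg hn.not_ge]
  obtain ⟨k, rfl⟩ := Int.exists_eq_neg_ofNat hn
  rw [coeff_aeval_Zl_neg, coeff_polyPart, if_pos hn, finsetSum_coeff]
  simp only [coeff_monomial, Finset.sum_ite_eq', Finset.mem_range]
  split_ifs with hk
  · rfl
  · exact HahnSeries.coeff_eq_zero_of_lt_order (by omega)

theorem isRatFn_aeval (P : ℚ[X]) : IsRatFn (aeval Zl P) :=
  ⟨P, 1, one_ne_zero, by simp⟩

theorem isRatFn_polyPart (x : LS) : IsRatFn (polyPart x) :=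
  polyPart_eq_aeval x ▸ isRatFn_aeval _

theorem IsRatFn.add {x y : LS} (hx : IsRatFn x) (hy : IsRatFn y) : IsRatFn (x + y) := by
  obtain ⟨P₁, Q₁, hQ₁, h₁⟩ := hx
  obtain ⟨P₂, Q₂, hQ₂, h₂⟩ := hy
  refine ⟨P₁ * Q₂ + P₂ * Q₁, Q₁ * Q₂, mul_ne_zero hQ₁ hQ₂, ?_⟩
  simp only [map_mul, map_add]
  linear_combination aeval Zl Q₂ * h₁ + aeval Zl Q₁ * h₂

theorem IsRatFn.inv {x : LS} (hx : IsRatFn x) : IsRatFn x⁻¹ := by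
  rcases eq_or_ne x 0 with rfl | hx0
  · simpa using hx
  obtain ⟨P, Q, hQ, h⟩ := hx
  refine ⟨Q, P, fun hP => ?_, ?_⟩
  · rw [hP, map_zero, mul_eq_zero] at h
    exact hQ (aeval_Zl_injective (h.resolve_left hx0 |>.trans (map_zero _).symm))
  · rw [← h, inv_mul_cancel_left₀ hx0]

end RatFn

section Convergence

theorem contDen_succ_ne_zero_and_ldeg {a : ℕ → LS} (ha : ∀ n, 1 ≤ ldeg (a (n + 1))) (n : ℕ) :
    contDen a (n + 1) ≠ 0 ∧ ldeg (contDen a n) ≤ ldeg (contDen a (n + 1)) ∧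
      n ≤ ldeg (contDen a (n + 1)) := by
  induction n with
  | zero => simp [contDen, ldeg]
  | succ n ih =>
    obtain ⟨hq, hmono, hn⟩ := ih
    have hdeg : ldeg (contDen a (n + 1 + 1)) = ldeg (a (n + 1)) + ldeg (contDen a (n + 1)) :=
      ldeg_mul_add_of_le (ha n) hq hmono
    have := ha n
    exact ⟨ne_zero_of_ldeg_ne_zero (by omega), by omega, by push_cast; omega⟩

theorem ldeg_contNum_div_contDen_sub_le {F a : ℕ → LS} (ha : ∀ n, 1 ≤ ldeg (a (n + 1)))
    (hF : ∀ n, F (n + 1) * (F n - a n) = 1) (hF₁ : ∀ n, 1 ≤ ldeg (F (n + 1))) (n : ℕ) :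
    ldeg (contNum a (n + 1) / contDen a (n + 1) - F 0) ≤ -n := by
  obtain ⟨hq, hmono, hn⟩ := contDen_succ_ne_zero_and_ldeg ha n
  have hD := ldeg_mul_add_of_le (hF₁ n) hq hmono
  have herr := contNum_sub_mul_contDen_mul hF n
  have hne : (-1 : LS) ^ (n + 1) ≠ 0 := pow_ne_zero _ (neg_ne_zero.2 one_ne_zero)
  have hdiff := ldeg_mul (left_ne_zero_of_mul (herr ▸ hne)) (right_ne_zero_of_mul (herr ▸ hne))
  rw [herr, ldeg_neg_one_pow] at hdiff
  have hsplit : contNum a (n + 1) / contDen a (n + 1) - F 0 =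
      (contNum a (n + 1) - F 0 * contDen a (n + 1)) * (contDen a (n + 1))⁻¹ := by
    field_simp
  rw [hsplit, ldeg_mul (left_ne_zero_of_mul (herr ▸ hne)) (inv_ne_zero hq), ldeg_inv]
  have := hF₁ n
  omega

theorem exists_Dmet_lt_of_ldeg_sub_le {x : ℕ → LS} {y : LS} (h : ∀ n : ℕ, ldeg (x n - y) ≤ -n)
    {ε : ℝ} (hε : 0 < ε) : ∃ N : ℕ, ∀ n ≥ N, Dmet (x n) y < ε := by
  obtain ⟨N, hN⟩ := exists_pow_lt_of_lt_one hε (by norm_num : (2⁻¹ : ℝ) < 1)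
  refine ⟨N, fun n hn => ?_⟩
  calc Dmet (x n) y ≤ 2 ^ ldeg (x n - y) := Dmet_le_zpow_ldeg_sub _ _
    _ ≤ 2 ^ (-n : ℤ) := zpow_le_zpow_right₀ one_le_two (h n)
    _ = 2⁻¹ ^ n := by rw [zpow_neg, zpow_natCast, inv_pow]
    _ ≤ 2⁻¹ ^ N := pow_le_pow_of_le_one (by norm_num) (by norm_num) hn
    _ < ε := hN

end Convergence

section Algorithm

variable {f : LS}

theorem not_isRatFn_Fseq (hf : ¬ IsRatFn f) (n : ℕ) : ¬ IsRatFn (Fseq f n) := by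
  induction n with
  | zero => exact hf
  | succ n ih =>
    intro hrat
    refine ih ?_
    have : Fseq f n = polyPart (Fseq f n) + (Fseq f (n + 1))⁻¹ := by
      rw [Fseq, inv_inv, add_sub_cancel]
    exact this ▸ (isRatFn_polyPart _).add hrat.inv

theorem Fseq_ne_polyPart (hf : ¬ IsRatFn f) (n : ℕ) : Fseq f n ≠ polyPart (Fseq f n) :=
  fun h => not_isRatFn_Fseq hf n (h ▸ isRatFn_polyPart _)

theorem Fseq_succ_mul_sub_polyPart (hf : ¬ IsRatFn f) (n : ℕ) :
    Fseq f (n + 1) * (Fseq f n - polyPart (Fseq f n)) = 1 :=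
  inv_mul_cancel₀ (sub_ne_zero.2 (Fseq_ne_polyPart hf n))

theorem one_le_ldeg_Fseq_succ (hf : ¬ IsRatFn f) (n : ℕ) : 1 ≤ ldeg (Fseq f (n + 1)) := by
  rw [Fseq, ldeg_inv]
  linarith [ldeg_sub_polyPart_neg (Fseq_ne_polyPart hf n)]

theorem one_le_ldeg_polyPart_Fseq_succ (hf : ¬ IsRatFn f) (n : ℕ) :
    1 ≤ ldeg (polyPart (Fseq f (n + 1))) := by
  rw [ldeg_polyPart (by linarith [one_le_ldeg_Fseq_succ hf n])]
  exact one_le_ldeg_Fseq_succ hf n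

end Algorithm

/-- continued fraction algorithm for Laurent series: if f is not a
rational function then the algorithm is well defined (fₙ ≠ aₙ for n ≥ 1), the
partial quotients aₙ = ⌊fₙ⌋ have degree ≥ 1 for n ≥ 1, and the convergents of
[a₀, a₁, a₂, ...] converge to f in the metric on ℚ((z⁻¹)). -/
theorem cf_algorithm (f : LS) (hf : ¬ IsRatFn f) :
    (∀ n : ℕ, 1 ≤ n → Fseq f n ≠ polyPart (Fseq f n)) ∧
    (∀ n : ℕ, 1 ≤ n → 1 ≤ ldeg (polyPart (Fseq f n))) ∧
    (∀ ε : ℝ, 0 < ε → ∃ N : ℕ, ∀ n ≥ N,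
      Dmet (cfP (fun k => polyPart (Fseq f k)) n / cfQ (fun k => polyPart (Fseq f k)) n) f < ε) := by
  refine ⟨fun n _ => Fseq_ne_polyPart hf n, fun n hn => ?_, fun ε hε => ?_⟩
  · obtain ⟨m, rfl⟩ := Nat.exists_eq_add_of_le' hn
    exact one_le_ldeg_polyPart_Fseq_succ hf m
  · simp only [cfP_eq_contNum, cfQ_eq_contDen]
    exact exists_Dmet_lt_of_ldeg_sub_le (ldeg_contNum_div_contDen_sub_le
      (one_le_ldeg_polyPart_Fseq_succ hf) (Fseq_succ_mul_sub_polyPart hf)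
      (one_le_ldeg_Fseq_succ hf)) hε
end
end

section
/- (Criterion for convergents of Laurent series) Let p, q ∈ ℚ[z] be coprime with q ≠ 0, and let f ∈ ℚ((z⁻¹)) be non-rational. Then deg(q f - p) < -deg(q) if and only if p/q is a convergent of the continued fraction expansion of f. -/
noncomputable section
open Classical Polynomial

/-- The partial quotients of the continued fraction algorithm applied to f. -/
def cfa (f : LS) (n : ℕ) : LS := polyPart (Fseq f n)


/-!
Work with the continuants `P_n, Q_n` of the partial quotients as polynomials in `z`. Their
determinant is `±1`, `deg Q_n` is strictly increasing, and the error `Q_n f - P_n` has degree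
`-deg Q_{n+1}`. So if `p/q = P_n/Q_n` in lowest terms, `q` differs from `Q_n` by a unit and the
inequality holds. Conversely, pick `n` with `deg Q_n ≤ deg q < deg Q_{n+1}` and write
`(p, q) = x (P_n, Q_n) + y (P_{n+1}, Q_{n+1})`. If `y ≠ 0`, the two summands of `q` must have
equal degree, which makes `x (Q_n f - P_n)` the dominant term of `q f - p`, of degree `≥ -deg q`;
hence `y = 0` and `p/q = P_n/Q_n`.
-/

namespace ConvergentCriterion

section Continuants

variable {R : Type*} [CommRing R] (a : ℕ → R)

/-- `contNum a (n + 2) / contDen a (n + 2)` is the `n`-th convergent of `[a 0; a 1, a 2, …]`;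
indices `0` and `1` hold the seeds `p₋₂ = 0, p₋₁ = 1, q₋₂ = 1, q₋₁ = 0`. -/
def contNum : ℕ → R
  | 0 => 0
  | 1 => 1
  | n + 2 => a n * contNum (n + 1) + contNum n

def contDen : ℕ → R
  | 0 => 1
  | 1 => 0
  | n + 2 => a n * contDen (n + 1) + contDen n

theorem contNum_mul_contDen_sub (n : ℕ) :
    contNum a (n + 1) * contDen a n - contNum a n * contDen a (n + 1) = (-1) ^ n := by
  induction n with
  | zero => simp [contNum, contDen]
  | succ n ih =>
    simp only [contNum, contDen, pow_succ]
    linear_combination (-1 : R) * ih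

theorem neg_one_pow_sq (n : ℕ) : ((-1 : R) ^ n) ^ 2 = 1 := by
  rw [← pow_mul, mul_comm, pow_mul, neg_one_sq, one_pow]

theorem isCoprime_contNum_contDen (n : ℕ) : IsCoprime (contNum a n) (contDen a n) :=
  ⟨-(-1) ^ n * contDen a (n + 1), (-1) ^ n * contNum a (n + 1), by
    linear_combination (-1) ^ n * contNum_mul_contDen_sub a n + neg_one_pow_sq (R := R) n⟩

theorem exists_eq_mul_contNum_add_mul (p q : R) (n : ℕ) :
    ∃ x y, p = x * contNum a n + y * contNum a (n + 1) ∧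
      q = x * contDen a n + y * contDen a (n + 1) := by
  have hdet := contNum_mul_contDen_sub a n
  refine ⟨(-1) ^ n * (contNum a (n + 1) * q - contDen a (n + 1) * p),
    (-1) ^ n * (contDen a n * p - contNum a n * q), ?_, ?_⟩
  · linear_combination -((-1) ^ n * p) * hdet - p * neg_one_pow_sq (R := R) n
  · linear_combination -((-1) ^ n * q) * hdet - q * neg_one_pow_sq (R := R) n

theorem map_contNum {S F : Type*} [CommRing S] [FunLike F R S] [RingHomClass F R S] (φ : F) :
    ∀ n, φ (contNum a n) = contNum (φ ∘ a) n
  | 0 => map_zero φ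
  | 1 => map_one φ
  | n + 2 => by simp [contNum, map_contNum φ (n + 1), map_contNum φ n]

theorem map_contDen {S F : Type*} [CommRing S] [FunLike F R S] [RingHomClass F R S] (φ : F) :
    ∀ n, φ (contDen a n) = contDen (φ ∘ a) n
  | 0 => map_one φ
  | 1 => map_zero φ
  | n + 2 => by simp [contDen, map_contDen φ (n + 1), map_contDen φ n]

end Continuants

theorem cfP_eq_contNum (a : ℕ → LS) : ∀ n, cfP a n = contNum a (n + 2)
  | 0 => by simp [cfP, contNum]
  | 1 => by simp [cfP, contNum]
  | n + 2 => by rw [cfP, cfP_eq_contNum a (n + 1), cfP_eq_contNum a n]; rfl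

theorem cfQ_eq_contDen (a : ℕ → LS) : ∀ n, cfQ a n = contDen a (n + 2)
  | 0 => by simp [cfQ, contDen]
  | 1 => by simp [cfQ, contDen]
  | n + 2 => by rw [cfQ, cfQ_eq_contDen a (n + 1), cfQ_eq_contDen a n]; rfl

section Degrees

theorem natDegree_eq_of_natDegree_add_lt {S : Type*} [Semiring S] {p q : S[X]}
    (h : (p + q).natDegree < q.natDegree) : p.natDegree = q.natDegree := by
  rcases lt_trichotomy p.natDegree q.natDegree with hlt | heq | hgt
  · rw [natDegree_add_eq_right_of_natDegree_lt hlt] at h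
    omega
  · exact heq
  · rw [natDegree_add_eq_left_of_natDegree_lt hgt] at h
    omega

variable {R : Type*} [CommRing R] [IsDomain R]

theorem ne_zero_and_natDegree_add_eq_of_natDegree_lt {x y Q Q' : R[X]} (hQ : Q ≠ 0)
    (hQ' : Q' ≠ 0) (hy : y ≠ 0) (h : (x * Q + y * Q').natDegree < Q'.natDegree) :
    x ≠ 0 ∧ x.natDegree + Q.natDegree = y.natDegree + Q'.natDegree := by
  have hbal := natDegree_eq_of_natDegree_add_lt (p := x * Q) (q := y * Q')
    (by rw [natDegree_mul hy hQ']; omega)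
  have hx : x ≠ 0 := by
    rintro rfl
    rw [zero_mul, natDegree_zero, natDegree_mul hy hQ'] at hbal
    omega
  rw [natDegree_mul hx hQ, natDegree_mul hy hQ'] at hbal
  exact ⟨hx, hbal⟩

variable {a : ℕ → R[X]} (ha : ∀ n, 0 < (a (n + 1)).natDegree)
include ha

theorem natDegree_contDen_add_three_of_le {n : ℕ} (h0 : contDen a (n + 2) ≠ 0)
    (hle : (contDen a (n + 1)).natDegree ≤ (contDen a (n + 2)).natDegree) :
    (contDen a (n + 3)).natDegree = (a (n + 1)).natDegree + (contDen a (n + 2)).natDegree := by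
  have ha0 : a (n + 1) ≠ 0 := ne_zero_of_natDegree_gt (ha n)
  have hlt : (contDen a (n + 1)).natDegree < (a (n + 1) * contDen a (n + 2)).natDegree := by
    rw [natDegree_mul ha0 h0]
    have := ha n
    omega
  rw [contDen, natDegree_add_eq_left_of_natDegree_lt hlt, natDegree_mul ha0 h0]

theorem contDen_add_two_ne_zero_and_natDegree_le : ∀ n,
    contDen a (n + 2) ≠ 0 ∧ (contDen a (n + 1)).natDegree ≤ (contDen a (n + 2)).natDegree
  | 0 => by simp [contDen]
  | n + 1 => by
    obtain ⟨h0, hle⟩ := contDen_add_two_ne_zero_and_natDegree_le n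
    have hdeg := natDegree_contDen_add_three_of_le ha h0 hle
    have := ha n
    show contDen a (n + 3) ≠ 0 ∧ (contDen a (n + 2)).natDegree ≤ (contDen a (n + 3)).natDegree
    exact ⟨ne_zero_of_natDegree_gt (n := 0) (by omega), by omega⟩

theorem contDen_add_two_ne_zero (n : ℕ) : contDen a (n + 2) ≠ 0 :=
  (contDen_add_two_ne_zero_and_natDegree_le ha n).1

theorem natDegree_contDen_add_three (n : ℕ) :
    (contDen a (n + 3)).natDegree = (a (n + 1)).natDegree + (contDen a (n + 2)).natDegree :=
  natDegree_contDen_add_three_of_le ha (contDen_add_two_ne_zero_and_natDegree_le ha n).1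
    (contDen_add_two_ne_zero_and_natDegree_le ha n).2

theorem strictMono_natDegree_contDen : StrictMono fun n => (contDen a (n + 2)).natDegree :=
  strictMono_nat_of_lt_succ fun n => by
    have := natDegree_contDen_add_three ha n
    have := ha n
    show _ < (contDen a (n + 3)).natDegree
    omega

end Degrees

theorem exists_le_lt_succ_of_strictMono {s : ℕ → ℕ} (hs : StrictMono s) {D : ℕ}
    (h0 : s 0 ≤ D) :
    ∃ n, s n ≤ D ∧ D < s (n + 1) := by
  by_contra! h
  have hle : ∀ n, s n ≤ D := fun n => Nat.rec h0 h n
  have : D + 1 ≤ s (D + 1) := hs.le_apply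
  exact absurd (hle (D + 1)) (by omega)

section LaurentDegree

theorem ldeg_mul {a b : LS} (ha : a ≠ 0) (hb : b ≠ 0) : ldeg (a * b) = ldeg a + ldeg b := by
  simp only [ldeg, HahnSeries.order_mul ha hb]
  omega

theorem ldeg_neg (a : LS) : ldeg (-a) = ldeg a := by
  simp [ldeg, HahnSeries.order_neg]

theorem ldeg_inv {a : LS} (ha : a ≠ 0) : ldeg a⁻¹ = -ldeg a := by
  have h := ldeg_mul ha (inv_ne_zero ha)
  rw [mul_inv_cancel₀ ha, show ldeg 1 = 0 by simp [ldeg]] at h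
  omega

open HahnSeries in
theorem ldeg_add_eq_left {a b : LS} (ha : a ≠ 0) (h : ldeg b < ldeg a) :
    ldeg (a + b) = ldeg a := by
  rcases eq_or_ne b 0 with rfl | hb
  · rw [add_zero]
  have hlt : a.orderTop < b.orderTop := by
    rw [← order_eq_orderTop_of_ne_zero ha, ← order_eq_orderTop_of_ne_zero hb]
    exact_mod_cast (by simp only [ldeg] at h; omega : a.order < b.order)
  have hadd := orderTop_add_eq_left hlt
  have hab : a + b ≠ 0 := orderTop_ne_top.mp (hadd ▸ orderTop_ne_top.mpr ha)
  rw [← order_eq_orderTop_of_ne_zero ha, ← order_eq_orderTop_of_ne_zero hab] at hadd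
  simp only [ldeg, WithTop.coe_inj.mp hadd]

theorem ldeg_sub_polyPart_neg {g : LS} (h : g - polyPart g ≠ 0) : ldeg (g - polyPart g) < 0 := by
  have : 1 ≤ (g - polyPart g).order := by
    refine (HahnSeries.le_order_iff_forall h).mpr fun j hj => ?_
    simp [polyPart, show j ≤ 0 by omega]
  simp only [ldeg]
  omega

end LaurentDegree

section PolynomialsInZ

theorem aeval_Zl_monomial (k : ℕ) (c : ℚ) :
    aeval Zl (monomial k c) = HahnSeries.single (-(k : ℤ)) c := by
  rw [← C_mul_X_pow_eq_monomial, map_mul, aeval_C, map_pow, aeval_X, Zl, HahnSeries.single_pow,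
    Subsingleton.elim (algebraMap ℚ LS) HahnSeries.C, HahnSeries.C_apply,
    HahnSeries.single_mul_single]
  simp

theorem coeff_aeval_Zl (P : ℚ[X]) (n : ℤ) :
    (aeval Zl P).coeff n = if n ≤ 0 then P.coeff (-n).toNat else 0 := by
  induction P using Polynomial.induction_on' with
  | add P Q hP hQ =>
    rw [map_add, HahnSeries.coeff_add, hP, hQ]
    split_ifs <;> simp
  | monomial k c =>
    rw [aeval_Zl_monomial, HahnSeries.coeff_single, coeff_monomial]
    by_cases h : n = -k
    · subst h
      simp
    · rw [if_neg h]
      split_ifs <;> first | rfl | omega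

theorem coeff_aeval_Zl_neg (P : ℚ[X]) (k : ℕ) : (aeval Zl P).coeff (-k) = P.coeff k := by
  simp [coeff_aeval_Zl]

theorem aeval_Zl_injective : Function.Injective (aeval Zl : ℚ[X] → LS) := fun P Q h => by
  ext k
  rw [← coeff_aeval_Zl_neg, h, coeff_aeval_Zl_neg]

theorem aeval_Zl_ne_zero {P : ℚ[X]} (hP : P ≠ 0) : aeval Zl P ≠ 0 :=
  (map_ne_zero_iff _ aeval_Zl_injective).mpr hP

theorem ldeg_aeval_Zl {P : ℚ[X]} (hP : P ≠ 0) : ldeg (aeval Zl P) = P.natDegree := by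
  have hlead : (aeval Zl P).coeff (-P.natDegree) ≠ 0 := by
    rw [coeff_aeval_Zl_neg]
    exact leadingCoeff_ne_zero.mpr hP
  have hle : -(P.natDegree : ℤ) ≤ (aeval Zl P).order := by
    refine (HahnSeries.le_order_iff_forall (aeval_Zl_ne_zero hP)).mpr fun j hj => ?_
    rw [coeff_aeval_Zl, if_pos (by omega)]
    exact coeff_eq_zero_of_natDegree_lt (by omega)
  have := HahnSeries.order_le_of_coeff_ne_zero hlead
  simp only [ldeg]
  omega

def toPoly (f : LS) : ℚ[X] :=
  ∑ i ∈ Finset.range ((ldeg f).toNat + 1), monomial i (f.coeff (-i))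

theorem coeff_toPoly (f : LS) (i : ℕ) : (toPoly f).coeff i = f.coeff (-i) := by
  simp only [toPoly, finsetSum_coeff, coeff_monomial, Finset.sum_ite_eq', Finset.mem_range]
  split_ifs with hi
  · rfl
  rcases eq_or_ne f 0 with rfl | hf
  · rfl
  exact (HahnSeries.coeff_eq_zero_of_lt_order (by simp only [ldeg] at hi; omega)).symm

theorem aeval_toPoly (f : LS) : aeval Zl (toPoly f) = polyPart f := by
  ext n
  rw [coeff_aeval_Zl]
  split_ifs with hn
  · rw [coeff_toPoly, show -((-n).toNat : ℤ) = n by omega]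
    simp [polyPart, hn]
  · simp [polyPart, hn]

theorem natDegree_toPoly {f : LS} (hf : f ≠ 0) (h : 0 ≤ ldeg f) :
    ((toPoly f).natDegree : ℤ) = ldeg f := by
  have hlead : (toPoly f).coeff (ldeg f).toNat ≠ 0 := by
    rw [coeff_toPoly, show -((ldeg f).toNat : ℤ) = f.order by simp only [ldeg] at h ⊢; omega]
    exact HahnSeries.coeff_order_eq_zero.not.mpr hf
  have hle : (toPoly f).natDegree ≤ (ldeg f).toNat :=
    natDegree_le_iff_coeff_eq_zero.mpr fun i hi => by
      rw [coeff_toPoly]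
      exact HahnSeries.coeff_eq_zero_of_lt_order (by simp only [ldeg] at hi ⊢; omega)
  rw [natDegree_eq_of_le_of_coeff_ne_zero hle hlead]
  omega

end PolynomialsInZ

section RationalFunctions

theorem isRatFn_aeval (P : ℚ[X]) : IsRatFn (aeval Zl P) :=
  ⟨P, 1, one_ne_zero, by simp⟩

theorem IsRatFn.add_aeval {g : LS} (h : IsRatFn g) (R : ℚ[X]) : IsRatFn (g + aeval Zl R) := by
  obtain ⟨P, Q, hQ, hg⟩ := h
  refine ⟨P + R * Q, Q, hQ, ?_⟩
  rw [map_add, map_mul, ← hg]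
  ring

theorem IsRatFn.inv {g : LS} (h : IsRatFn g) : IsRatFn g⁻¹ := by
  obtain ⟨P, Q, hQ, hg⟩ := h
  rcases eq_or_ne g 0 with rfl | hg0
  · rw [inv_zero]
    exact ⟨0, 1, one_ne_zero, by simp⟩
  have hP : P ≠ 0 := by
    rintro rfl
    rw [map_zero] at hg
    exact mul_ne_zero hg0 (aeval_Zl_ne_zero hQ) hg
  refine ⟨Q, P, hP, ?_⟩
  rw [← hg, ← mul_assoc, inv_mul_cancel₀ hg0, one_mul]

end RationalFunctions

section ContinuedFraction

variable {f : LS}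

theorem not_isRatFn_Fseq (hf : ¬ IsRatFn f) : ∀ n, ¬ IsRatFn (Fseq f n)
  | 0 => hf
  | n + 1 => fun h => not_isRatFn_Fseq hf n <| by
    simpa [Fseq, aeval_toPoly] using IsRatFn.add_aeval (IsRatFn.inv h) (toPoly (Fseq f n))

theorem sub_polyPart_Fseq_ne_zero (hf : ¬ IsRatFn f) (n : ℕ) :
    Fseq f n - polyPart (Fseq f n) ≠ 0 := fun h => by
  refine not_isRatFn_Fseq hf n ?_
  rw [sub_eq_zero.mp h, ← aeval_toPoly]
  exact isRatFn_aeval _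

theorem Fseq_succ_ne_zero (hf : ¬ IsRatFn f) (n : ℕ) : Fseq f (n + 1) ≠ 0 :=
  inv_ne_zero (sub_polyPart_Fseq_ne_zero hf n)

theorem one_le_ldeg_Fseq_succ (hf : ¬ IsRatFn f) (n : ℕ) : 1 ≤ ldeg (Fseq f (n + 1)) := by
  have := ldeg_sub_polyPart_neg (sub_polyPart_Fseq_ne_zero hf n)
  rw [Fseq, ldeg_inv (sub_polyPart_Fseq_ne_zero hf n)]
  omega

def partialQuot (f : LS) (n : ℕ) : ℚ[X] := toPoly (Fseq f n)

theorem aeval_partialQuot (f : LS) (n : ℕ) : aeval Zl (partialQuot f n) = cfa f n :=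
  aeval_toPoly _

theorem natDegree_partialQuot_succ (hf : ¬ IsRatFn f) (n : ℕ) :
    ((partialQuot f (n + 1)).natDegree : ℤ) = ldeg (Fseq f (n + 1)) :=
  natDegree_toPoly (Fseq_succ_ne_zero hf n) (by linarith [one_le_ldeg_Fseq_succ hf n])

theorem natDegree_partialQuot_succ_pos (hf : ¬ IsRatFn f) (n : ℕ) :
    0 < (partialQuot f (n + 1)).natDegree := by
  have := natDegree_partialQuot_succ hf n
  have := one_le_ldeg_Fseq_succ hf n
  omega

theorem aeval_contNum_partialQuot (f : LS) (n : ℕ) :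
    aeval Zl (contNum (partialQuot f) n) = contNum (cfa f) n := by
  rw [map_contNum]
  exact congrArg (contNum · n) (funext (aeval_partialQuot f))

theorem aeval_contDen_partialQuot (f : LS) (n : ℕ) :
    aeval Zl (contDen (partialQuot f) n) = contDen (cfa f) n := by
  rw [map_contDen]
  exact congrArg (contDen · n) (funext (aeval_partialQuot f))

def approxErr (f : LS) (n : ℕ) : LS := contDen (cfa f) n * f - contNum (cfa f) n

theorem approxErr_succ_mul_Fseq (hf : ¬ IsRatFn f) :
    ∀ n, approxErr f (n + 1) * Fseq f n = -approxErr f n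
  | 0 => by simp [approxErr, contNum, contDen, Fseq]
  | n + 1 => by
    have ih := approxErr_succ_mul_Fseq hf n
    have hinv : (Fseq f (n + 1))⁻¹ * Fseq f (n + 1) = 1 :=
      inv_mul_cancel₀ (Fseq_succ_ne_zero hf n)
    have hF : (Fseq f (n + 1))⁻¹ = Fseq f n - cfa f n := inv_inv _
    have hrec : approxErr f (n + 2) = cfa f n * approxErr f (n + 1) + approxErr f n := by
      simp only [approxErr, contNum, contDen]
      ring
    rw [hrec]
    linear_combination Fseq f (n + 1) * ih + Fseq f (n + 1) * approxErr f (n + 1) * hF -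
      approxErr f (n + 1) * hinv

theorem approxErr_succ_ne_zero_and_ldeg (hf : ¬ IsRatFn f) : ∀ n, approxErr f (n + 1) ≠ 0 ∧
    ldeg (approxErr f (n + 1)) = -((contDen (partialQuot f) (n + 2)).natDegree : ℤ)
  | 0 => by simp [approxErr, contNum, contDen, ldeg]
  | n + 1 => by
    obtain ⟨hne, hdeg⟩ := approxErr_succ_ne_zero_and_ldeg hf n
    have hmul := approxErr_succ_mul_Fseq hf (n + 1)
    have hne' : approxErr f (n + 2) ≠ 0 := by
      intro h0
      rw [h0, zero_mul, zero_eq_neg] at hmul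
      exact hne hmul
    refine ⟨hne', ?_⟩
    have hsum := ldeg_mul hne' (Fseq_succ_ne_zero hf n)
    rw [hmul, ldeg_neg, hdeg] at hsum
    have := natDegree_contDen_add_three (natDegree_partialQuot_succ_pos hf) n
    have := natDegree_partialQuot_succ hf n
    show ldeg (approxErr f (n + 2)) = -((contDen (partialQuot f) (n + 3)).natDegree : ℤ)
    omega

theorem div_eq_cfP_div_cfQ_iff (hf : ¬ IsRatFn f) {p q : ℚ[X]} (hq : q ≠ 0) (n : ℕ) :
    aeval Zl p / aeval Zl q = cfP (cfa f) n / cfQ (cfa f) n ↔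
      p * contDen (partialQuot f) (n + 2) = contNum (partialQuot f) (n + 2) * q := by
  rw [cfP_eq_contNum, cfQ_eq_contDen, ← aeval_contNum_partialQuot, ← aeval_contDen_partialQuot,
    div_eq_div_iff (aeval_Zl_ne_zero hq)
      (aeval_Zl_ne_zero (contDen_add_two_ne_zero (natDegree_partialQuot_succ_pos hf) n)),
    ← map_mul, ← map_mul, aeval_Zl_injective.eq_iff]

theorem eq_zero_of_ldeg_lt (hf : ¬ IsRatFn f) {p q x y : ℚ[X]} {n : ℕ}
    (hp : p = x * contNum (partialQuot f) (n + 2) + y * contNum (partialQuot f) (n + 3))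
    (hq : q = x * contDen (partialQuot f) (n + 2) + y * contDen (partialQuot f) (n + 3))
    (hlo : (contDen (partialQuot f) (n + 2)).natDegree ≤ q.natDegree)
    (hhi : q.natDegree < (contDen (partialQuot f) (n + 3)).natDegree)
    (h : ldeg (aeval Zl q * f - aeval Zl p) < -(q.natDegree : ℤ)) : y = 0 := by
  by_contra hy
  have ha := natDegree_partialQuot_succ_pos hf
  have hQ₃ : contDen (partialQuot f) (n + 3) ≠ 0 := contDen_add_two_ne_zero ha (n + 1)
  obtain ⟨hx, hbal⟩ := ne_zero_and_natDegree_add_eq_of_natDegree_lt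
    (contDen_add_two_ne_zero ha n) hQ₃ hy (hq ▸ hhi)
  have hsplit : aeval Zl q * f - aeval Zl p =
      aeval Zl x * approxErr f (n + 2) + aeval Zl y * approxErr f (n + 3) := by
    simp only [hp, hq, approxErr, map_add, map_mul, aeval_contNum_partialQuot,
      aeval_contDen_partialQuot]
    ring
  obtain ⟨he₂, hd₂⟩ : approxErr f (n + 2) ≠ 0 ∧
      ldeg (approxErr f (n + 2)) = -((contDen (partialQuot f) (n + 3)).natDegree : ℤ) :=
    approxErr_succ_ne_zero_and_ldeg hf (n + 1)
  obtain ⟨he₃, hd₃⟩ : approxErr f (n + 3) ≠ 0 ∧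
      ldeg (approxErr f (n + 3)) = -((contDen (partialQuot f) (n + 4)).natDegree : ℤ) :=
    approxErr_succ_ne_zero_and_ldeg hf (n + 2)
  have hmono :
      (contDen (partialQuot f) (n + 2)).natDegree < (contDen (partialQuot f) (n + 4)).natDegree :=
    strictMono_natDegree_contDen ha (show n < n + 2 by omega)
  have hX := ldeg_mul (aeval_Zl_ne_zero hx) he₂
  have hY := ldeg_mul (aeval_Zl_ne_zero hy) he₃
  rw [ldeg_aeval_Zl hx, hd₂] at hX
  rw [ldeg_aeval_Zl hy, hd₃] at hY
  rw [hsplit, ldeg_add_eq_left (mul_ne_zero (aeval_Zl_ne_zero hx) he₂) (by omega), hX] at h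
  omega

theorem exists_mul_eq_of_ldeg_lt (hf : ¬ IsRatFn f) {p q : ℚ[X]}
    (h : ldeg (aeval Zl q * f - aeval Zl p) < -(q.natDegree : ℤ)) :
    ∃ n, p * contDen (partialQuot f) (n + 2) = contNum (partialQuot f) (n + 2) * q := by
  obtain ⟨n, hlo, hhi⟩ := exists_le_lt_succ_of_strictMono
    (strictMono_natDegree_contDen (natDegree_partialQuot_succ_pos hf)) (D := q.natDegree)
    (by simp [contDen])
  obtain ⟨x, y, hp, hq⟩ := exists_eq_mul_contNum_add_mul (partialQuot f) p q (n + 2)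
  refine ⟨n, ?_⟩
  rw [hp, hq, eq_zero_of_ldeg_lt hf hp hq hlo hhi h]
  ring

theorem ldeg_lt_of_mul_eq (hf : ¬ IsRatFn f) {p q : ℚ[X]} (hcop : IsCoprime p q) {n : ℕ}
    (h : p * contDen (partialQuot f) (n + 2) = contNum (partialQuot f) (n + 2) * q) :
    ldeg (aeval Zl q * f - aeval Zl p) < -(q.natDegree : ℤ) := by
  set P := contNum (partialQuot f) (n + 2)
  set Q := contDen (partialQuot f) (n + 2)
  have ha := natDegree_partialQuot_succ_pos hf
  have hQ : Q ≠ 0 := contDen_add_two_ne_zero ha n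
  have hqQ : q ∣ Q := hcop.symm.dvd_of_dvd_mul_right ⟨P, by rw [mul_comm, h, mul_comm]⟩
  have hQq : Q ∣ q := (isCoprime_contNum_contDen _ _).symm.dvd_of_dvd_mul_right
    ⟨p, by rw [mul_comm, ← h, mul_comm]⟩
  obtain ⟨u, hu⟩ := associated_of_dvd_dvd hQq hqQ
  have hp : p = P * u := mul_right_cancel₀ hQ (by rw [h, ← hu]; ring)
  have hu₀ : (u : ℚ[X]) ≠ 0 := u.ne_zero
  have hu_deg : (u : ℚ[X]).natDegree = 0 := natDegree_eq_zero_of_isUnit u.isUnit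
  have herr : aeval Zl q * f - aeval Zl p = aeval Zl (u : ℚ[X]) * approxErr f (n + 2) := by
    rw [← hu, hp, approxErr, ← aeval_contNum_partialQuot, ← aeval_contDen_partialQuot,
      map_mul, map_mul]
    ring
  obtain ⟨he, hd⟩ : approxErr f (n + 2) ≠ 0 ∧
      ldeg (approxErr f (n + 2)) = -((contDen (partialQuot f) (n + 3)).natDegree : ℤ) :=
    approxErr_succ_ne_zero_and_ldeg hf (n + 1)
  have hmono : Q.natDegree < (contDen (partialQuot f) (n + 3)).natDegree :=
    strictMono_natDegree_contDen ha n.lt_succ_self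
  rw [herr, ldeg_mul (aeval_Zl_ne_zero hu₀) he, ldeg_aeval_Zl hu₀, hu_deg, hd, ← hu,
    natDegree_mul hQ hu₀, hu_deg]
  omega

end ContinuedFraction

end ConvergentCriterion

open ConvergentCriterion

/-- criterion for convergents: for coprime p, q ∈ ℚ[z] with q ≠ 0
and a non-rational f ∈ ℚ((z⁻¹)), deg(q f - p) < -deg q holds if and only if p/q
is a convergent of the continued fraction expansion of f. -/
theorem convergent_criterion (f : LS) (hf : ¬ IsRatFn f)
    (p q : Polynomial ℚ) (hq : q ≠ 0) (hcop : IsCoprime p q) :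
    ldeg (Polynomial.aeval Zl q * f - Polynomial.aeval Zl p) < -(q.natDegree : ℤ) ↔
      ∃ n : ℕ, Polynomial.aeval Zl p / Polynomial.aeval Zl q
        = cfP (cfa f) n / cfQ (cfa f) n := by
  simp only [div_eq_cfP_div_cfQ_iff hf hq]
  exact ⟨exists_mul_eq_of_ldeg_lt hf, fun ⟨_, h⟩ => ldeg_lt_of_mul_eq hf hcop h⟩
end
end

section
/- Let f ∈ ℚ((z⁻¹)) satisfy the Mahler functional equation B(z) f(z) = A(z) f(z^d) + C(z) with A, B, C ∈ ℤ[z], A·B ≠ 0, d ≥ 2, and let p_k/q_k be a convergent of f with deg(q_k f - p_k) = -d_{k+1}. Define q_{k,m}(z) = q_k(z^{d^m}) ∏_{t=0}^{m-1} B(z^{d^t}), and p_{k,m}(z) = p_k(z^{d^m}) ∏_{t=0}^{m-1} A(z^{d^t}) + q_k(z^{d^m}) Σ_{u=0}^{m-1} (∏_{t=0}^{u-1} A(z^{d^t})) C(z^{d^u}) (∏_{t=u+1}^{m-1} B(z^{d^t})). Then q_{k,m}(z) f(z) - p_{k,m}(z) = (∏_{t=0}^{m-1} A(z^{d^t}))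 · (q_k(z^{d^m}) f(z^{d^m}) - p_k(z^{d^m})) for all m ≥ 1; in particular deg(q_{k,m} f - p_{k,m}) = Σ_{t=0}^{m-1} d^t deg(A) - d^m d_{k+1}. -/
noncomputable section
open Classical Polynomial

/-- Substitution z ↦ z^d on formal Laurent series: (powSub d f)(z) = f(z^d).
In the variable X = z⁻¹ this sends the exponent n to d·n. -/
def powSub (d : ℕ) (f : LS) : LS :=
  if hd : 0 < d then
    HahnSeries.embDomain
      (OrderEmbedding.ofStrictMono (fun n : ℤ => (d : ℤ) * n)
        (fun a b h => mul_lt_mul_of_pos_left h (by exact_mod_cast hd))) f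
  else f

lemma algebraMap_LS (r : ℚ) : algebraMap ℚ LS r = HahnSeries.C r := by
  have : (algebraMap ℚ LS) r = HahnSeries.ofPowerSeries ℤ ℚ (PowerSeries.C r) := rfl
  rw [this, HahnSeries.ofPowerSeries_C]

def psiRH (e : ℕ) (he : 0 < e) : LS →+* LS :=
  HahnSeries.embDomainRingHom (AddMonoidHom.mulLeft (e : ℤ))
    (fun a b h => by
      simpa using mul_left_cancel₀ (by exact_mod_cast he.ne' : (e:ℤ) ≠ 0) h)
    (fun a b => by simpa using mul_le_mul_iff_right₀ (by exact_mod_cast he : (0:ℤ) < e))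

def psi (e : ℕ) (he : 0 < e) : LS →ₐ[ℚ] LS where
  toRingHom := psiRH e he
  commutes' r := by rw [algebraMap_LS]; exact HahnSeries.embDomainRingHom_C

lemma psi_apply (e : ℕ) (he : 0 < e) (x : LS) :
    psi e he x = HahnSeries.embDomain
      ⟨⟨fun n : ℤ => (e : ℤ) * n, fun a b h => by
        simpa using mul_left_cancel₀ (by exact_mod_cast he.ne' : (e:ℤ) ≠ 0) h⟩,
        fun {a b} => by exact mul_le_mul_iff_right₀ (by exact_mod_cast he : (0:ℤ) < e)⟩ x := rfl

lemma powSub_eq_psi (e : ℕ) (he : 0 < e) (x : LS) : powSub e x = psi e he x := by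
  rw [powSub, dif_pos he, psi_apply]
  congr 1

lemma psi_coeff (e : ℕ) (he : 0 < e) (x : LS) (n : ℤ) :
    (psi e he x).coeff ((e : ℤ) * n) = x.coeff n := by
  rw [psi_apply]; exact HahnSeries.embDomain_coeff

lemma psi_coeff_zero (e : ℕ) (he : 0 < e) (x : LS) (n : ℤ)
    (hn : ¬ ∃ a : ℤ, (e : ℤ) * a = n) : (psi e he x).coeff n = 0 := by
  rw [psi_apply]
  exact HahnSeries.embDomain_of_notMem_range (by rintro ⟨a, ha⟩; exact hn ⟨a, ha⟩)

lemma psi_Zl (e : ℕ) (he : 0 < e) : psi e he Zl = Zl ^ e := by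
  rw [psi_apply, Zl, HahnSeries.embDomain_single, HahnSeries.single_pow]
  norm_num
  exact congrArg (fun g => HahnSeries.single g (1:ℚ)) (by show (e:ℤ) * (-1) = -(e:ℤ); ring)

lemma aeval_Zl_coeff (P : Polynomial ℚ) (n : ℤ) :
    (Polynomial.aeval Zl P).coeff n = if n ≤ 0 then P.coeff (-n).toNat else 0 := by
  have hsum : ∀ (s : Finset ℕ) (F : ℕ → LS), (∑ i ∈ s, F i).coeff n = ∑ i ∈ s, (F i).coeff n := by
    intro s F
    induction s using Finset.induction with
    | empty => simp
    | insert a s hx ih => rw [Finset.sum_insert hx, Finset.sum_insert hx,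
        HahnSeries.coeff_add, ih]
  rw [Polynomial.aeval_def, Polynomial.eval₂_eq_sum_range, hsum]
  have hterm : ∀ i : ℕ, ((algebraMap ℚ LS) (P.coeff i) * Zl ^ i).coeff n =
      if n = -(i : ℤ) then P.coeff i else 0 := by
    intro i
    rw [algebraMap_LS, Zl, HahnSeries.single_pow, HahnSeries.C_apply,
      HahnSeries.single_mul_single]
    simp [HahnSeries.coeff_single]
  rw [Finset.sum_congr rfl (fun i _ => hterm i)]
  by_cases hn : n ≤ 0
  · rw [if_pos hn]
    have h1 : ∀ i : ℕ, (n = -(i : ℤ)) ↔ i = (-n).toNat := by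
      intro i
      constructor
      · rintro rfl; simp
      · rintro rfl; rw [Int.toNat_of_nonneg (by omega)]; ring
    simp only [h1]
    rw [Finset.sum_ite_eq' (Finset.range (P.natDegree + 1)) ((-n).toNat) (fun i => P.coeff i)]
    split
    · rfl
    · next h =>
      rw [Finset.mem_range, not_lt] at h
      exact (P.coeff_eq_zero_of_natDegree_lt (by omega)).symm
  · rw [if_neg hn]
    apply Finset.sum_eq_zero
    intro i _
    rw [if_neg (by omega)]

lemma aeval_Zl_ne_zero (P : Polynomial ℚ) (hP : P ≠ 0) : Polynomial.aeval Zl P ≠ 0 := by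
  intro h
  have := aeval_Zl_coeff P (-(P.natDegree : ℤ))
  rw [h] at this
  simp only [HahnSeries.coeff_zero, neg_neg, Int.toNat_natCast, if_pos (by omega : -(P.natDegree : ℤ) ≤ 0)] at this
  exact (Polynomial.leadingCoeff_ne_zero.mpr hP) this.symm

lemma order_aeval_Zl (P : Polynomial ℚ) (hP : P ≠ 0) :
    (Polynomial.aeval Zl P).order = -(P.natDegree : ℤ) := by
  apply le_antisymm
  · apply HahnSeries.order_le_of_coeff_ne_zero
    rw [aeval_Zl_coeff, if_pos (by omega : -(P.natDegree : ℤ) ≤ 0)]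
    simpa using Polynomial.leadingCoeff_ne_zero.mpr hP
  · by_contra h
    push_neg at h
    have h0 := HahnSeries.coeff_order_eq_zero.not.2 (aeval_Zl_ne_zero P hP)
    rw [aeval_Zl_coeff] at h0
    have hle : (Polynomial.aeval Zl P).order ≤ 0 := by omega
    rw [if_pos hle] at h0
    exact h0 (P.coeff_eq_zero_of_natDegree_lt (by omega))

lemma psi_ne_zero (e : ℕ) (he : 0 < e) (x : LS) (hx : x ≠ 0) : psi e he x ≠ 0 := by
  intro h
  have := psi_coeff e he x x.order
  rw [h] at this
  exact HahnSeries.coeff_order_eq_zero.not.2 hx this.symm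

lemma order_psi (e : ℕ) (he : 0 < e) (x : LS) (hx : x ≠ 0) :
    (psi e he x).order = (e : ℤ) * x.order := by
  apply le_antisymm
  · apply HahnSeries.order_le_of_coeff_ne_zero
    rw [psi_coeff]
    exact HahnSeries.coeff_order_eq_zero.not.2 hx
  · by_contra h
    push_neg at h
    have h0 := HahnSeries.coeff_order_eq_zero.not.2 (psi_ne_zero e he x hx)
    set o := (psi e he x).order with ho
    by_cases hr : ∃ a : ℤ, (e : ℤ) * a = o
    · obtain ⟨a, ha⟩ := hr
      rw [← ha, psi_coeff] at h0
      have : a < x.order := by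
        by_contra hc
        push_neg at hc
        have : (e : ℤ) * x.order ≤ (e : ℤ) * a :=
          mul_le_mul_of_nonneg_left hc (by positivity)
        omega
      exact h0 (HahnSeries.coeff_eq_zero_of_lt_order this)
    · exact h0 (psi_coeff_zero e he x o hr)

lemma psi_comp (e₁ e₂ : ℕ) (h₁ : 0 < e₁) (h₂ : 0 < e₂) (x : LS) :
    psi e₁ h₁ (psi e₂ h₂ x) = psi (e₁ * e₂) (by positivity) x := by
  ext n
  by_cases hr : ∃ a : ℤ, ((e₁ * e₂ : ℕ) : ℤ) * a = n
  · obtain ⟨a, rfl⟩ := hr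
    rw [psi_coeff]
    have : ((e₁ * e₂ : ℕ) : ℤ) * a = (e₁ : ℤ) * ((e₂ : ℤ) * a) := by push_cast; ring
    rw [this, psi_coeff, psi_coeff]
  · rw [psi_coeff_zero _ _ _ _ hr]
    by_cases hr1 : ∃ a : ℤ, (e₁ : ℤ) * a = n
    · obtain ⟨a, rfl⟩ := hr1
      rw [psi_coeff]
      apply psi_coeff_zero
      rintro ⟨b, rfl⟩
      exact hr ⟨b, by push_cast; ring⟩
    · exact psi_coeff_zero _ _ _ _ hr1

lemma aeval_int_eq (P : Polynomial ℤ) (x : LS) :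
    Polynomial.aeval x P = Polynomial.aeval x (P.map (Int.castRingHom ℚ)) := by
  rw [Polynomial.aeval_def, Polynomial.aeval_def, Polynomial.eval₂_map]
  congr 1
  exact RingHom.ext_int _ _

lemma psi_aeval_rat (e : ℕ) (he : 0 < e) (P : Polynomial ℚ) (x : LS) :
    psi e he (Polynomial.aeval x P) = Polynomial.aeval (psi e he x) P :=
  (Polynomial.aeval_algHom_apply (psi e he) x P).symm

lemma psi_aeval_int (e : ℕ) (he : 0 < e) (P : Polynomial ℤ) (x : LS) :
    psi e he (Polynomial.aeval x P) = Polynomial.aeval (psi e he x) P := by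
  rw [aeval_int_eq, aeval_int_eq, psi_aeval_rat]

lemma map_int_ne_zero (P : Polynomial ℤ) (hP : P ≠ 0) : P.map (Int.castRingHom ℚ) ≠ 0 := by
  intro h
  apply hP
  apply Polynomial.map_injective (Int.castRingHom ℚ)
    (fun a b hab => by simpa using hab)
  simpa using h

lemma aeval_Zl_int_ne_zero (P : Polynomial ℤ) (hP : P ≠ 0) : Polynomial.aeval Zl P ≠ 0 := by
  rw [aeval_int_eq]
  exact aeval_Zl_ne_zero _ (map_int_ne_zero P hP)

lemma order_aeval_Zl_int (P : Polynomial ℤ) (hP : P ≠ 0) :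
    (Polynomial.aeval Zl P).order = -(P.natDegree : ℤ) := by
  rw [aeval_int_eq, order_aeval_Zl _ (map_int_ne_zero P hP),
    Polynomial.natDegree_map_eq_of_injective (fun a b hab => by simpa using hab)]

/-- Proof-irrelevant version of `psi`. -/
def Psi (e : ℕ) : LS →ₐ[ℚ] LS := if he : 0 < e then psi e he else AlgHom.id ℚ LS

lemma Psi_pos {e : ℕ} (he : 0 < e) : Psi e = psi e he := dif_pos he

lemma Psi_one (x : LS) : Psi 1 x = x := by
  rw [Psi_pos (by norm_num : (0:ℕ) < 1)]
  ext n
  have := psi_coeff 1 (by norm_num) x n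
  simpa using this

lemma powSub_eq_Psi (e : ℕ) (he : 0 < e) (x : LS) : powSub e x = Psi e x := by
  rw [Psi_pos he, powSub_eq_psi e he]

lemma Psi_Zl (e : ℕ) (he : 0 < e) : Psi e Zl = Zl ^ e := by
  rw [Psi_pos he, psi_Zl]

lemma Psi_comp (e₁ e₂ : ℕ) (h₁ : 0 < e₁) (h₂ : 0 < e₂) (x : LS) :
    Psi e₁ (Psi e₂ x) = Psi (e₁ * e₂) x := by
  rw [Psi_pos h₁, Psi_pos h₂, Psi_pos (by positivity : 0 < e₁ * e₂), psi_comp]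

lemma Psi_ne_zero (e : ℕ) (he : 0 < e) (x : LS) (hx : x ≠ 0) : Psi e x ≠ 0 := by
  rw [Psi_pos he]; exact psi_ne_zero e he x hx

lemma order_Psi (e : ℕ) (he : 0 < e) (x : LS) (hx : x ≠ 0) :
    (Psi e x).order = (e : ℤ) * x.order := by
  rw [Psi_pos he]; exact order_psi e he x hx

lemma Psi_aeval_rat (e : ℕ) (he : 0 < e) (P : Polynomial ℚ) (x : LS) :
    Psi e (Polynomial.aeval x P) = Polynomial.aeval (Psi e x) P := by
  rw [Psi_pos he]; exact psi_aeval_rat e he P x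

lemma Psi_aeval_int (e : ℕ) (he : 0 < e) (P : Polynomial ℤ) (x : LS) :
    Psi e (Polynomial.aeval x P) = Polynomial.aeval (Psi e x) P := by
  rw [Psi_pos he]; exact psi_aeval_int e he P x

lemma order_prodLS (s : Finset ℕ) (F : ℕ → LS) (h : ∀ t ∈ s, F t ≠ 0) :
    (∏ t ∈ s, F t).order = ∑ t ∈ s, (F t).order := by
  classical
  induction s using Finset.induction with
  | empty => simp
  | insert a s hx ih =>
    rw [Finset.prod_insert hx, Finset.sum_insert hx,
      HahnSeries.order_mul (h a (Finset.mem_insert_self a s))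
        (Finset.prod_ne_zero_iff.mpr fun t ht => h t (Finset.mem_insert_of_mem ht)),
      ih (fun t ht => h t (Finset.mem_insert_of_mem ht))]

section Iter
variable {d : ℕ}

lemma Psi_step_int (hd0 : 0 < d) (P : Polynomial ℤ) (t : ℕ) :
    Psi d (Polynomial.aeval ((Zl : LS) ^ d ^ t) P) = Polynomial.aeval ((Zl : LS) ^ d ^ (t + 1)) P := by
  rw [← Psi_Zl (d ^ t) (pow_pos hd0 t), ← Psi_aeval_int (d ^ t) (pow_pos hd0 t),
    Psi_comp d (d ^ t) hd0 (pow_pos hd0 t), ← pow_succ',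
    Psi_aeval_int (d ^ (t + 1)) (pow_pos hd0 (t + 1)), Psi_Zl (d ^ (t + 1)) (pow_pos hd0 (t + 1))]

lemma Psi_step_rat (hd0 : 0 < d) (P : Polynomial ℚ) (t : ℕ) :
    Psi d (Polynomial.aeval ((Zl : LS) ^ d ^ t) P) = Polynomial.aeval ((Zl : LS) ^ d ^ (t + 1)) P := by
  rw [← Psi_Zl (d ^ t) (pow_pos hd0 t), ← Psi_aeval_rat (d ^ t) (pow_pos hd0 t),
    Psi_comp d (d ^ t) hd0 (pow_pos hd0 t), ← pow_succ',
    Psi_aeval_rat (d ^ (t + 1)) (pow_pos hd0 (t + 1)), Psi_Zl (d ^ (t + 1)) (pow_pos hd0 (t + 1))]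

/-- q_{k}-side partial product ∏_{t<m} P(z^{d^t}). -/
def prodPm (P : Polynomial ℤ) (d m : ℕ) : LS :=
  ∏ t ∈ Finset.range m, Polynomial.aeval (Zl ^ d ^ t) P

lemma prodPm_succ (hd0 : 0 < d) (P : Polynomial ℤ) (m : ℕ) :
    prodPm P d (m + 1) = Polynomial.aeval Zl P * Psi d (prodPm P d m) := by
  rw [prodPm, prodPm, Finset.prod_range_succ', map_prod]
  rw [Finset.prod_congr rfl fun t _ => Psi_step_int hd0 P t]
  rw [mul_comm]
  congr 1
  rw [pow_zero, pow_one]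

lemma Psi_prod_Ico (hd0 : 0 < d) (P : Polynomial ℤ) (u v : ℕ) :
    Psi d (∏ t ∈ Finset.Ico u v, Polynomial.aeval ((Zl : LS) ^ d ^ t) P) =
      ∏ t ∈ Finset.Ico (u + 1) (v + 1), Polynomial.aeval ((Zl : LS) ^ d ^ t) P := by
  rw [map_prod, Finset.prod_congr rfl fun t _ => Psi_step_int hd0 P t,
    Finset.prod_Ico_eq_prod_range, Finset.prod_Ico_eq_prod_range,
    show v + 1 - (u + 1) = v - u by omega]
  refine Finset.prod_congr rfl fun i _ => ?_
  rw [show u + 1 + i = u + i + 1 by omega]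

lemma Psi_prod_range (hd0 : 0 < d) (P : Polynomial ℤ) (m : ℕ) :
    Psi d (prodPm P d m) =
      ∏ t ∈ Finset.Ico 1 (m + 1), Polynomial.aeval ((Zl : LS) ^ d ^ t) P := by
  rw [prodPm, Finset.range_eq_Ico, Psi_prod_Ico hd0]

/-- The inhomogeneous sum. -/
def Sm (A C B : Polynomial ℤ) (d m : ℕ) : LS :=
  ∑ u ∈ Finset.range m,
    (∏ t ∈ Finset.range u, Polynomial.aeval (Zl ^ d ^ t) A) *
      Polynomial.aeval (Zl ^ d ^ u) C *
      ∏ t ∈ Finset.Ico (u + 1) m, Polynomial.aeval (Zl ^ d ^ t) B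

lemma Sm_succ (hd0 : 0 < d) (A C B : Polynomial ℤ) (m : ℕ) :
    Sm A C B d (m + 1) =
      Polynomial.aeval Zl C * Psi d (prodPm B d m) +
        Polynomial.aeval Zl A * Psi d (Sm A C B d m) := by
  simp only [Sm]
  rw [Finset.sum_range_succ', add_comm]
  congr 1
  · -- the u = 0 term
    rw [pow_zero, pow_one, Finset.range_zero, Finset.prod_empty, one_mul,
      ← Psi_prod_range hd0]
  · -- the u+1 terms
    rw [map_sum, Finset.mul_sum]
    refine Finset.sum_congr rfl fun u hu => ?_
    rw [map_mul, map_mul, Psi_step_int hd0, Psi_prod_Ico hd0,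
      show (∏ t ∈ Finset.range (u + 1), Polynomial.aeval ((Zl:LS) ^ d ^ t) A) =
        prodPm A d (u + 1) from rfl,
      show Psi d (∏ t ∈ Finset.range u, Polynomial.aeval ((Zl:LS) ^ d ^ t) A) =
        Psi d (prodPm A d u) from rfl, prodPm_succ hd0]
    ring

end Iter

/-- iterating the Mahler functional equation. If B f(z) = A f(z^d) + C
and p_k/q_k is a convergent of f with deg(q_k f - p_k) = -d_{k+1}, then with
q_{k,m}(z) = q_k(z^{d^m}) ∏_{t<m} B(z^{d^t}) and
p_{k,m}(z) = p_k(z^{d^m}) ∏_{t<m} A(z^{d^t})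
  + q_k(z^{d^m}) Σ_{u<m} (∏_{t<u} A(z^{d^t})) C(z^{d^u}) (∏_{u<t<m} B(z^{d^t})),
one has q_{k,m} f - p_{k,m} = (∏_{t<m} A(z^{d^t})) (q_k(z^{d^m}) f(z^{d^m}) - p_k(z^{d^m}))
for all m ≥ 1, and deg(q_{k,m} f - p_{k,m}) = Σ_{t<m} d^t·deg A - d^m·d_{k+1}. -/
theorem mahler_iterated (A B C : Polynomial ℤ) (hA : A ≠ 0) (hB : B ≠ 0)
    (d : ℕ) (hd : 2 ≤ d) (f : LS)
    (hM : Polynomial.aeval Zl B * f = Polynomial.aeval Zl A * powSub d f + Polynomial.aeval Zl C)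
    (pk qk : Polynomial ℚ)
    (hconv : ∃ n : ℕ, cfP (cfa f) n = Polynomial.aeval Zl pk ∧
      cfQ (cfa f) n = Polynomial.aeval Zl qk)
    (dk1 : ℤ)
    (hnz : Polynomial.aeval Zl qk * f - Polynomial.aeval Zl pk ≠ 0)
    (hdeg : ldeg (Polynomial.aeval Zl qk * f - Polynomial.aeval Zl pk) = -dk1) :
    ∀ m : ℕ, 1 ≤ m →
      let qkm : LS := Polynomial.aeval (Zl ^ d ^ m) qk *
        ∏ t ∈ Finset.range m, Polynomial.aeval (Zl ^ d ^ t) B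
      let pkm : LS := Polynomial.aeval (Zl ^ d ^ m) pk *
          (∏ t ∈ Finset.range m, Polynomial.aeval (Zl ^ d ^ t) A) +
        Polynomial.aeval (Zl ^ d ^ m) qk *
          ∑ u ∈ Finset.range m,
            (∏ t ∈ Finset.range u, Polynomial.aeval (Zl ^ d ^ t) A) *
              Polynomial.aeval (Zl ^ d ^ u) C *
              ∏ t ∈ Finset.Ico (u + 1) m, Polynomial.aeval (Zl ^ d ^ t) B
      (qkm * f - pkm =
        (∏ t ∈ Finset.range m, Polynomial.aeval (Zl ^ d ^ t) A) *
          (Polynomial.aeval (Zl ^ d ^ m) qk * powSub (d ^ m) f -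
            Polynomial.aeval (Zl ^ d ^ m) pk)) ∧
      ldeg (qkm * f - pkm) =
        (∑ t ∈ Finset.range m, (d : ℤ) ^ t * A.natDegree) - (d : ℤ) ^ m * dk1 := by
  have hd0 : 0 < d := by omega
  set g : LS := Polynomial.aeval Zl qk * f - Polynomial.aeval Zl pk with hgdef
  rw [powSub_eq_Psi d hd0] at hM
  have key : ∀ m : ℕ,
      (Polynomial.aeval (Zl ^ d ^ m) qk * prodPm B d m) * f -
        (Polynomial.aeval (Zl ^ d ^ m) pk * prodPm A d m +
          Polynomial.aeval (Zl ^ d ^ m) qk * Sm A C B d m) =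
      prodPm A d m * Psi (d ^ m) g := by
    intro m
    induction m with
    | zero =>
      simp only [pow_zero, pow_one, prodPm, Sm, Finset.range_zero, Finset.prod_empty,
        Finset.sum_empty, mul_one, mul_zero, add_zero, one_mul]
      rw [Psi_one, hgdef]
    | succ m ih =>
      have hQ : Polynomial.aeval ((Zl:LS) ^ d ^ (m+1)) qk =
          Psi d (Polynomial.aeval (Zl ^ d ^ m) qk) := (Psi_step_rat hd0 qk m).symm
      have hP : Polynomial.aeval ((Zl:LS) ^ d ^ (m+1)) pk =
          Psi d (Polynomial.aeval (Zl ^ d ^ m) pk) := (Psi_step_rat hd0 pk m).symm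
      have hcomp : Psi (d ^ (m+1)) g = Psi d (Psi (d ^ m) g) := by
        rw [Psi_comp d (d ^ m) hd0 (pow_pos hd0 m), ← pow_succ']
      have ihψ := congrArg (Psi d) ih
      simp only [map_sub, map_mul, map_add] at ihψ
      rw [hQ, hP, prodPm_succ hd0 A m, prodPm_succ hd0 B m, Sm_succ hd0 A C B m, hcomp]
      linear_combination (Psi d (Polynomial.aeval ((Zl:LS) ^ d ^ m) qk) *
        Psi d (prodPm B d m)) * hM + Polynomial.aeval Zl A * ihψ
  intro m hm
  have hpow : 0 < d ^ m := pow_pos hd0 m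
  have hPsi_g : Psi (d ^ m) g = Polynomial.aeval (Zl ^ d ^ m) qk * powSub (d ^ m) f -
      Polynomial.aeval (Zl ^ d ^ m) pk := by
    rw [hgdef, map_sub, map_mul, Psi_aeval_rat _ hpow, Psi_aeval_rat _ hpow,
      Psi_Zl _ hpow, powSub_eq_Psi _ hpow]
  have h1 : (Polynomial.aeval (Zl ^ d ^ m) qk * prodPm B d m) * f -
        (Polynomial.aeval (Zl ^ d ^ m) pk * prodPm A d m +
          Polynomial.aeval (Zl ^ d ^ m) qk * Sm A C B d m) =
      prodPm A d m * (Polynomial.aeval (Zl ^ d ^ m) qk * powSub (d ^ m) f -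
            Polynomial.aeval (Zl ^ d ^ m) pk) := by
    rw [key m, hPsi_g]
  -- degree computation
  have hAt : ∀ t : ℕ, Polynomial.aeval ((Zl:LS) ^ d ^ t) A =
      Psi (d ^ t) (Polynomial.aeval Zl A) := fun t => by
    rw [Psi_aeval_int _ (pow_pos hd0 t), Psi_Zl _ (pow_pos hd0 t)]
  have hAne : ∀ t : ℕ, Polynomial.aeval ((Zl:LS) ^ d ^ t) A ≠ 0 := fun t => by
    rw [hAt t]
    exact Psi_ne_zero _ (pow_pos hd0 t) _ (aeval_Zl_int_ne_zero A hA)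
  have hordA : ∀ t : ℕ, (Polynomial.aeval ((Zl:LS) ^ d ^ t) A).order =
      ((d : ℤ) ^ t) * (-(A.natDegree : ℤ)) := fun t => by
    rw [hAt t, order_Psi _ (pow_pos hd0 t) _ (aeval_Zl_int_ne_zero A hA),
      order_aeval_Zl_int A hA]
    push_cast
    ring
  have hprodne : prodPm A d m ≠ 0 := Finset.prod_ne_zero_iff.mpr fun t _ => hAne t
  have hgne : g ≠ 0 := hnz
  have hΨg : Psi (d ^ m) g ≠ 0 := Psi_ne_zero _ hpow _ hgne
  have hordg : g.order = dk1 := by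
    rw [ldeg] at hdeg
    omega
  have h2 : ldeg ((Polynomial.aeval (Zl ^ d ^ m) qk * prodPm B d m) * f -
        (Polynomial.aeval (Zl ^ d ^ m) pk * prodPm A d m +
          Polynomial.aeval (Zl ^ d ^ m) qk * Sm A C B d m)) =
      (∑ t ∈ Finset.range m, (d : ℤ) ^ t * A.natDegree) - (d : ℤ) ^ m * dk1 := by
    rw [key m, ldeg, HahnSeries.order_mul hprodne hΨg,
      show prodPm A d m = ∏ t ∈ Finset.range m, Polynomial.aeval ((Zl:LS) ^ d ^ t) A from rfl,
      order_prodLS _ _ (fun t _ => hAne t),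
      Finset.sum_congr rfl (fun t _ => hordA t),
      order_Psi _ hpow _ hgne, hordg, neg_add, ← Finset.sum_neg_distrib]
    push_cast
    rw [Finset.sum_congr rfl (fun t _ => by ring :
      ∀ t ∈ Finset.range m, -((d:ℤ) ^ t * (-(A.natDegree:ℤ))) = (d:ℤ) ^ t * A.natDegree)]
    ring
  exact ⟨h1, h2⟩
end
end

section
/- Let A ∈ ℤ[z] with deg(A) = r_a and leading coefficient α, d ≥ 2 an integer, and b ∈ ℝ with |b| > 1 such that A(b^{d^t}) ≠ 0 for all integers t ≥ 0. Then there exist constants 0 < c < C such that c ≤ |∏_{t=0}^{m-1} A(b^{d^t})| / (|α|^m |b|^{r_a (d^m - 1)/(d-1)}) ≤ C for all m ≥ 1. -/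
/-! With `ρ(x) = |A(x)| / (|α| |x|^r_a)`, the ratio is exactly `∏_{t<m} ρ(b^{d^t})`, since
`∑_{t<m} d^t = (d^m - 1)/(d - 1)`. Comparing `A(x)` with its leading term gives
`|ρ(x) - 1| = O(1/|x|)`, and `|b^{d^t}| ≥ |b|^t` grows geometrically, so `∑ |ρ(b^{d^t}) - 1| < ∞`.
The factors are positive, hence `∑ log ρ(b^{d^t})` converges and the partial products are the
exponentials of a bounded sequence. -/

open Polynomial Finset

theorem Real.exists_bounds_prod_range_of_summable_sub_one {u : ℕ → ℝ} (hu : ∀ t, 0 < u t)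
    (h : Summable fun t => u t - 1) :
    ∃ c C : ℝ, 0 < c ∧ c < C ∧ ∀ m, c ≤ ∏ t ∈ range m, u t ∧ ∏ t ∈ range m, u t ≤ C := by
  have hlog : Summable fun t => Real.log (u t) := by
    simpa using Real.summable_log_one_add_of_summable h
  have hpartial := hlog.hasSum.tendsto_sum_nat
  obtain ⟨lb, hlb⟩ := hpartial.bddBelow_range
  obtain ⟨ub, hub⟩ := hpartial.bddAbove_range
  have hlb' (m : ℕ) : lb ≤ ∑ t ∈ range m, Real.log (u t) := hlb (Set.mem_range_self m)
  have hub' (m : ℕ) : ∑ t ∈ range m, Real.log (u t) ≤ ub := hub (Set.mem_range_self m)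
  have hprod (m : ℕ) : ∏ t ∈ range m, u t = Real.exp (∑ t ∈ range m, Real.log (u t)) := by
    rw [Real.exp_sum]
    exact prod_congr rfl fun t _ => (Real.exp_log (hu t)).symm
  refine ⟨Real.exp (lb - 1), Real.exp ub, Real.exp_pos _, ?_, fun m => ?_⟩
  · exact Real.exp_lt_exp.mpr (by linarith [hlb' 0, hub' 0])
  · rw [hprod]
    exact ⟨Real.exp_le_exp.mpr (by linarith [hlb' m]), Real.exp_le_exp.mpr (hub' m)⟩

namespace Polynomial

variable {𝕜 : Type*} [NormedField 𝕜]

theorem norm_eval_sub_leadingCoeff_mul_pow_mul_le (p : 𝕜[X]) {x : 𝕜} (hx : 1 ≤ ‖x‖) :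
    ‖p.eval x - p.leadingCoeff * x ^ p.natDegree‖ * ‖x‖ ≤
      (∑ i ∈ range p.natDegree, ‖p.coeff i‖) * ‖x‖ ^ p.natDegree := by
  rw [eval_eq_sum_range, sum_range_succ, coeff_natDegree, add_sub_cancel_right, sum_mul]
  refine (mul_le_mul_of_nonneg_right (norm_sum_le _ _) (norm_nonneg x)).trans ?_
  rw [sum_mul]
  refine sum_le_sum fun i hi => ?_
  rw [norm_mul, norm_pow, mul_assoc, ← pow_succ]
  exact mul_le_mul_of_nonneg_left (pow_le_pow_right₀ hx (mem_range.mp hi)) (norm_nonneg _)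

noncomputable def leadTermRatio (p : 𝕜[X]) (x : 𝕜) : ℝ :=
  ‖p.eval x‖ / (‖p.leadingCoeff‖ * ‖x‖ ^ p.natDegree)

theorem leadTermRatio_pos {p : 𝕜[X]} (hp : p ≠ 0) {x : 𝕜} (hx : x ≠ 0) (hpx : p.eval x ≠ 0) :
    0 < leadTermRatio p x := by
  unfold leadTermRatio
  have := leadingCoeff_ne_zero.mpr hp
  positivity

theorem abs_leadTermRatio_sub_one_mul_le {p : 𝕜[X]} (hp : p ≠ 0) {x : 𝕜} (hx : 1 ≤ ‖x‖) :
    |leadTermRatio p x - 1| * ‖x‖ ≤ (∑ i ∈ range p.natDegree, ‖p.coeff i‖) / ‖p.leadingCoeff‖ := by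
  have hlead : 0 < ‖p.leadingCoeff‖ := norm_pos_iff.mpr (leadingCoeff_ne_zero.mpr hp)
  have hD : 0 < ‖p.leadingCoeff‖ * ‖x‖ ^ p.natDegree := by positivity
  have hdist : |‖p.eval x‖ - ‖p.leadingCoeff‖ * ‖x‖ ^ p.natDegree| ≤
      ‖p.eval x - p.leadingCoeff * x ^ p.natDegree‖ := by
    simpa only [norm_mul, norm_pow] using
      abs_norm_sub_norm_le (p.eval x) (p.leadingCoeff * x ^ p.natDegree)
  rw [leadTermRatio, div_sub_one hD.ne', abs_div, abs_of_pos hD, div_mul_eq_mul_div,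
    div_le_div_iff₀ hD hlead]
  calc |‖p.eval x‖ - ‖p.leadingCoeff‖ * ‖x‖ ^ p.natDegree| * ‖x‖ * ‖p.leadingCoeff‖
      ≤ ‖p.eval x - p.leadingCoeff * x ^ p.natDegree‖ * ‖x‖ * ‖p.leadingCoeff‖ := by gcongr
    _ ≤ (∑ i ∈ range p.natDegree, ‖p.coeff i‖) * ‖x‖ ^ p.natDegree * ‖p.leadingCoeff‖ := by
        gcongr ?_ * _
        exact norm_eval_sub_leadingCoeff_mul_pow_mul_le p hx
    _ = _ := by ring

theorem summable_leadTermRatio_sub_one {p : 𝕜[X]} (hp : p ≠ 0) {x : ℕ → 𝕜} {r : ℝ} (hr : 1 < r)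
    (hx : ∀ t, r ^ t ≤ ‖x t‖) : Summable fun t => leadTermRatio p (x t) - 1 := by
  set K := (∑ i ∈ range p.natDegree, ‖p.coeff i‖) / ‖p.leadingCoeff‖
  have hr0 : 0 < r := one_pos.trans hr
  refine Summable.of_norm_bounded
    ((summable_geometric_of_lt_one (by positivity) (inv_lt_one_of_one_lt₀ hr)).mul_left K)
    fun t => ?_
  have hxt : 0 < r ^ t := pow_pos hr0 t
  rw [Real.norm_eq_abs, inv_pow, ← div_eq_mul_inv, le_div_iff₀ hxt]
  calc |leadTermRatio p (x t) - 1| * r ^ t ≤ |leadTermRatio p (x t) - 1| * ‖x t‖ := by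
        gcongr; exact hx t
    _ ≤ K := abs_leadTermRatio_sub_one_mul_le hp ((one_le_pow₀ hr.le).trans (hx t))

theorem abs_prod_aeval_div_eq_prod_leadTermRatio (A : ℤ[X]) {d : ℕ} (hd : 2 ≤ d)
    (b : ℝ) (m : ℕ) :
    |∏ t ∈ range m, aeval (b ^ d ^ t) A| /
        (|(A.leadingCoeff : ℝ)| ^ m * |b| ^ (A.natDegree * ((d ^ m - 1) / (d - 1)))) =
      ∏ t ∈ range m, leadTermRatio (A.map (Int.castRingHom ℝ)) (b ^ d ^ t) := by
  have hinj : Function.Injective (Int.castRingHom ℝ) := RingHom.injective_int _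
  simp only [leadTermRatio, prod_div_distrib, natDegree_map_eq_of_injective hinj,
    leadingCoeff_map_of_injective hinj, aeval_def, eval₂_eq_eval_map, algebraMap_int_eq,
    eq_intCast, ← Nat.geomSum_eq hd m, abs_prod, prod_mul_distrib, prod_const, card_range,
    Real.norm_eq_abs, abs_pow, ← pow_mul, sum_mul, prod_pow_eq_pow_sum, mul_comm A.natDegree]

end Polynomial

/-- for A ∈ ℤ[z] with deg A = r_a and leading coefficient α,
d ≥ 2 and b ∈ ℝ with |b| > 1 such that A(b^{d^t}) ≠ 0 for all t ≥ 0, the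
product ∏_{t<m} A(b^{d^t}) is Θ(|α|^m |b|^{r_a(d^m-1)/(d-1)}) in m: the ratio
is bounded between two positive constants for all m ≥ 1. -/
theorem product_theta (A : Polynomial ℤ) (hA : A ≠ 0) (d : ℕ) (hd : 2 ≤ d)
    (b : ℝ) (hb : 1 < |b|) (hroot : ∀ t : ℕ, Polynomial.aeval (b ^ d ^ t) A ≠ 0) :
    ∃ c C : ℝ, 0 < c ∧ c < C ∧ ∀ m : ℕ, 1 ≤ m →
      c ≤ |∏ t ∈ Finset.range m, Polynomial.aeval (b ^ d ^ t) A| /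
          (|(A.leadingCoeff : ℝ)| ^ m * |b| ^ (A.natDegree * ((d ^ m - 1) / (d - 1)))) ∧
      |∏ t ∈ Finset.range m, Polynomial.aeval (b ^ d ^ t) A| /
          (|(A.leadingCoeff : ℝ)| ^ m * |b| ^ (A.natDegree * ((d ^ m - 1) / (d - 1)))) ≤ C := by
  set p : ℝ[X] := A.map (Int.castRingHom ℝ)
  have hp : p ≠ 0 := (Polynomial.map_ne_zero_iff (RingHom.injective_int _)).mpr hA
  have hb0 : b ≠ 0 := abs_pos.mp (one_pos.trans hb)
  have hpos (t : ℕ) : 0 < leadTermRatio p (b ^ d ^ t) := by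
    refine leadTermRatio_pos hp (pow_ne_zero _ hb0) ?_
    simpa [p, aeval_def, eval₂_eq_eval_map] using hroot t
  have horbit (t : ℕ) : |b| ^ t ≤ ‖b ^ d ^ t‖ := by
    rw [norm_pow, Real.norm_eq_abs]
    exact pow_le_pow_right₀ hb.le (Nat.lt_pow_self (by omega)).le
  obtain ⟨c, C, hc, hcC, hbounds⟩ := Real.exists_bounds_prod_range_of_summable_sub_one hpos
    (summable_leadTermRatio_sub_one hp hb horbit)
  refine ⟨c, C, hc, hcC, fun m _ => ?_⟩
  rw [abs_prod_aeval_div_eq_prod_leadTermRatio A hd b m]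
  exact hbounds m
end

section
/- Let α ∈ ℝ and suppose there exist rational sequences p_n/q_n and p'_n/q'_n (q_n, q'_n > 0) and positive real sequences θ_n, δ_n, τ_n such that: (a) q'_n ≪ q_n^{θ_n}; (b) |α - p'_n/q'_n| = Θ((q'_n)^{-1-τ_n}) with τ_n bounded above; (c) (q'_n)^{τ_n} ≫ q_{n+1}^{δ_{n+1}} and q_n^{δ_n} → ∞. Then the irrationality exponent of α satisfies μ(α) ≤ limsup_{n→∞} max(1 + θ_n/δ_n, (1+τ_n) θ_n/δ_n). -/
noncomputable section
open Filter

/-- The irrationality exponent of a real number α, as an extended real: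
the supremum of all μ ∈ ℝ such that |α - p/q| < q^{-μ} has infinitely many
integer solutions (p, q) with q > 0. -/
def irrExp (α : ℝ) : EReal :=
  sSup {x : EReal | ∃ μ : ℝ, x = (μ : EReal) ∧
    {pq : ℤ × ℤ | 0 < pq.2 ∧ |α - (pq.1 : ℝ) / (pq.2 : ℝ)| < (pq.2 : ℝ) ^ (-μ)}.Infinite}

set_option maxHeartbeats 4000000 in
/-- upper bound on the irrationality exponent from two sequences of
rational approximations. If q'ₙ ≪ qₙ^{θₙ}, |α - p'ₙ/q'ₙ| = Θ((q'ₙ)^{-1-τₙ}) with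
τₙ bounded above, (q'ₙ)^{τₙ} ≫ q_{n+1}^{δ_{n+1}} and qₙ^{δₙ} → ∞, then
μ(α) ≤ limsup max(1 + θₙ/δₙ, (1+τₙ)θₙ/δₙ). -/
theorem irrExp_upper_bound (α : ℝ)
    (p p' : ℕ → ℤ) (q q' : ℕ → ℕ) (hq : ∀ n, 0 < q n) (hq' : ∀ n, 0 < q' n)
    (θ δ τ : ℕ → ℝ) (hθ : ∀ n, 0 < θ n) (hδ : ∀ n, 0 < δ n) (hτ : ∀ n, 0 < τ n)
    (ha : ∃ C : ℝ, 0 < C ∧ ∀ n, (q' n : ℝ) ≤ C * (q n : ℝ) ^ θ n)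
    (hb : ∃ c₁ c₂ : ℝ, 0 < c₁ ∧ 0 < c₂ ∧ ∀ n,
      c₁ * (q' n : ℝ) ^ (-(1 + τ n)) ≤ |α - (p' n : ℝ) / (q' n : ℝ)| ∧
      |α - (p' n : ℝ) / (q' n : ℝ)| ≤ c₂ * (q' n : ℝ) ^ (-(1 + τ n)))
    (hτbdd : ∃ T : ℝ, ∀ n, τ n ≤ T)
    (hc : ∃ c₃ : ℝ, 0 < c₃ ∧ ∀ n, c₃ * (q (n + 1) : ℝ) ^ δ (n + 1) ≤ (q' n : ℝ) ^ τ n)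
    (hc' : Tendsto (fun n => (q n : ℝ) ^ δ n) atTop atTop) :
    irrExp α ≤
      limsup (fun n => ((max (1 + θ n / δ n) ((1 + τ n) * θ n / δ n) : ℝ) : EReal)) atTop := by
  classical
  unfold irrExp
  refine sSup_le ?_
  rintro x ⟨μ, rfl, hinf⟩
  by_contra hcon
  rw [not_le] at hcon
  obtain ⟨μ', hμ'1, hμ'2⟩ := EReal.exists_between_coe_real hcon
  have hμ'μ : μ' < μ := by exact_mod_cast hμ'2
  have hev : ∀ᶠ n in atTop, max (1 + θ n / δ n) ((1 + τ n) * θ n / δ n) < μ' := by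
    filter_upwards [eventually_lt_of_limsup_lt hμ'1] with n hn
    exact_mod_cast hn
  obtain ⟨N, hN⟩ := eventually_atTop.mp hev
  obtain ⟨C₀, hC₀, hCa⟩ := ha
  set C : ℝ := max C₀ 1 with hCdef
  have hC1 : (1:ℝ) ≤ C := le_max_right _ _
  have hCpos : (0:ℝ) < C := lt_of_lt_of_le one_pos hC1
  have hCa' : ∀ n, (q' n : ℝ) ≤ C * (q n : ℝ) ^ θ n := by
    intro n
    refine (hCa n).trans ?_
    have h0 : (0:ℝ) ≤ (q n : ℝ) ^ θ n := by positivity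
    nlinarith [le_max_left C₀ (1:ℝ)]
  obtain ⟨c₁, c₂, hc₁, hc₂, hb'⟩ := hb
  obtain ⟨T₀, hT₀⟩ := hτbdd
  set T : ℝ := max T₀ 0 with hTdef
  have hT : ∀ n, τ n ≤ T := fun n => (hT₀ n).trans (le_max_left _ _)
  have hT0 : (0:ℝ) ≤ T := le_max_right _ _
  obtain ⟨c₃, hc₃, hc3⟩ := hc
  set K : ℝ := max 1 (2 * c₂ / c₃) with hKdef
  have hK1 : (1:ℝ) ≤ K := le_max_left _ _
  have hKpos : (0:ℝ) < K := lt_of_lt_of_le one_pos hK1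
  have hKc : 2 * c₂ ≤ c₃ * K := by
    have h := le_max_right 1 (2 * c₂ / c₃)
    calc 2 * c₂ = c₃ * (2 * c₂ / c₃) := by field_simp
      _ ≤ c₃ * K := by nlinarith
  obtain ⟨B₀, hB₀⟩ : ∃ B, ∀ j ≤ N, (q j : ℝ) ^ (δ j) ≤ B := by
    refine ⟨(Finset.range (N + 1)).sup' ⟨0, by simp⟩ (fun j => (q j : ℝ) ^ (δ j)),
      fun j hj => ?_⟩
    have hjmem : j ∈ Finset.range (N + 1) := Finset.mem_range.mpr (Nat.lt_succ_of_le hj)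
    exact Finset.le_sup' (fun j => (q j : ℝ) ^ (δ j)) hjmem
  set c₄ : ℝ := min (1 / (2 * C * K ^ (μ' - 1))) (c₁ / (C ^ (1 + T) * K ^ μ')) with hc₄def
  have hc₄ : 0 < c₄ := lt_min (by positivity) (by positivity)
  -- thresholds
  have hev1 : ∀ᶠ x : ℝ in atTop, 1 / c₄ + 1 ≤ x ^ (μ - μ') :=
    (tendsto_rpow_atTop (by linarith)).eventually_ge_atTop _
  have hev2 : ∀ᶠ x : ℝ in atTop, B₀ ≤ K * x :=
    (tendsto_id.const_mul_atTop hKpos).eventually_ge_atTop _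
  obtain ⟨x₀, hx₀⟩ := eventually_atTop.mp ((hev1.and hev2).and (eventually_ge_atTop 1))
  -- key claim: no solutions with large denominator
  have key : ∀ a b : ℤ, 0 < b → x₀ ≤ (b : ℝ) → ¬ (|α - (a : ℝ) / (b : ℝ)| < (b : ℝ) ^ (-μ)) := by
    intro a b hb0 hbx hsol
    obtain ⟨⟨hx1, hx2⟩, hb1⟩ := hx₀ (b : ℝ) hbx
    have hbpos : (0:ℝ) < (b : ℝ) := by linarith
    have hPex : ∃ m, K * (b : ℝ) < (q m : ℝ) ^ (δ m) := (hc'.eventually_gt_atTop _).exists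
    obtain ⟨m, hmspec, hmmin⟩ : ∃ m, (K * (b:ℝ) < (q m : ℝ) ^ (δ m)) ∧
        ∀ k < m, ¬(K * (b:ℝ) < (q k : ℝ) ^ (δ k)) :=
      ⟨Nat.find hPex, Nat.find_spec hPex, fun k hk => Nat.find_min hPex hk⟩
    have hNm : N < m := by
      by_contra h
      push_neg at h
      exact absurd hmspec (not_lt.mpr ((hB₀ m h).trans hx2))
    obtain ⟨n, rfl⟩ : ∃ n, m = n + 1 := ⟨m - 1, by omega⟩
    have hn : N ≤ n := by omega
    have hqn : (1:ℝ) ≤ (q n : ℝ) := by exact_mod_cast hq n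
    have hq'n : (1:ℝ) ≤ (q' n : ℝ) := by exact_mod_cast hq' n
    have hq'pos : (0:ℝ) < (q' n : ℝ) := lt_of_lt_of_le one_pos hq'n
    have hLn := hN n hn
    have h1 : 1 + θ n / δ n ≤ μ' := (le_max_left _ _).trans hLn.le
    have h2 : (1 + τ n) * θ n / δ n ≤ μ' := (le_max_right _ _).trans hLn.le
    have hKb1 : (1:ℝ) ≤ K * (b:ℝ) := by nlinarith
    have hqδ : (q n : ℝ) ^ (δ n) ≤ K * (b:ℝ) := not_lt.mp (hmmin n (by omega))
    have hδn := hδ n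
    have hθn := hθ n
    have hτn := hτ n
    have hθδ : (q n : ℝ) ^ (θ n) ≤ (K * (b:ℝ)) ^ (θ n / δ n) := by
      have e : (q n : ℝ) ^ (θ n) = ((q n : ℝ) ^ (δ n)) ^ (θ n / δ n) := by
        rw [← Real.rpow_mul (by positivity)]
        congr 1
        field_simp
      rw [e]
      exact Real.rpow_le_rpow (by positivity) hqδ (by positivity)
    have hQ2a : (q' n : ℝ) ≤ C * (K * (b:ℝ)) ^ (μ' - 1) := by
      calc (q' n : ℝ) ≤ C * (q n : ℝ) ^ (θ n) := hCa' n
        _ ≤ C * (K * (b:ℝ)) ^ (θ n / δ n) := by nlinarith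
        _ ≤ C * (K * (b:ℝ)) ^ (μ' - 1) := by
            have h3 := Real.rpow_le_rpow_of_exponent_le hKb1
              (show θ n / δ n ≤ μ' - 1 by linarith)
            nlinarith [Real.rpow_nonneg (le_of_lt (lt_of_lt_of_le one_pos hKb1)) (θ n / δ n)]
    have hQ2b : (q' n : ℝ) ^ (1 + τ n) ≤ C ^ (1 + T) * (K * (b:ℝ)) ^ μ' := by
      have e0 : ((q n : ℝ) ^ (θ n)) ^ (1 + τ n) = ((q n : ℝ) ^ (δ n)) ^ ((1 + τ n) * θ n / δ n) := by
        rw [← Real.rpow_mul (by positivity), ← Real.rpow_mul (by positivity)]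
        congr 1
        field_simp
      have e1 : ((q n : ℝ) ^ (θ n)) ^ (1 + τ n) ≤ (K * (b:ℝ)) ^ μ' := by
        rw [e0]
        calc ((q n : ℝ) ^ (δ n)) ^ ((1 + τ n) * θ n / δ n)
            ≤ (K * (b:ℝ)) ^ ((1 + τ n) * θ n / δ n) :=
              Real.rpow_le_rpow (by positivity) hqδ (by positivity)
          _ ≤ (K * (b:ℝ)) ^ μ' := Real.rpow_le_rpow_of_exponent_le hKb1 h2
      have e2 : C ^ (1 + τ n) ≤ C ^ (1 + T) :=
        Real.rpow_le_rpow_of_exponent_le hC1 (by linarith [hT n])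
      calc (q' n : ℝ) ^ (1 + τ n) ≤ (C * (q n : ℝ) ^ (θ n)) ^ (1 + τ n) :=
            Real.rpow_le_rpow (by positivity) (hCa' n) (by positivity)
        _ = C ^ (1 + τ n) * ((q n : ℝ) ^ (θ n)) ^ (1 + τ n) :=
            Real.mul_rpow hCpos.le (by positivity)
        _ ≤ C ^ (1 + T) * (K * (b:ℝ)) ^ μ' := by
            have hx : (0:ℝ) ≤ ((q n : ℝ) ^ (θ n)) ^ (1 + τ n) := by positivity
            have hy : (0:ℝ) < C ^ (1 + τ n) := by positivity
            nlinarith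
    have hq'τ : 2 * c₂ * (b:ℝ) ≤ (q' n : ℝ) ^ (τ n) := by
      have h' : c₃ * (K * (b:ℝ)) ≤ c₃ * (q (n+1) : ℝ) ^ (δ (n+1)) := by nlinarith
      calc 2 * c₂ * (b:ℝ) ≤ c₃ * K * (b:ℝ) := by nlinarith
        _ = c₃ * (K * (b:ℝ)) := by ring
        _ ≤ c₃ * (q (n+1) : ℝ) ^ (δ (n+1)) := h'
        _ ≤ (q' n : ℝ) ^ (τ n) := hc3 n
    -- main lower bound on |α - a/b|
    have hbound : c₄ * (b:ℝ) ^ (-μ') ≤ |α - (a : ℝ) / (b : ℝ)| := by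
      rcases eq_or_ne ((a:ℝ)/(b:ℝ)) ((p' n : ℝ)/(q' n : ℝ)) with hcase | hcase
      · -- equal fractions
        rw [hcase]
        refine le_trans ?_ (hb' n).1
        have e2 : c₁ / (C ^ (1 + T) * (K * (b:ℝ)) ^ μ') ≤ c₁ * (q' n : ℝ) ^ (-(1 + τ n)) := by
          rw [Real.rpow_neg hq'pos.le, mul_comm c₁, ← div_eq_inv_mul]
          exact div_le_div_of_nonneg_left hc₁.le (by positivity) hQ2b
        refine le_trans ?_ e2
        have e3 : c₁ / (C ^ (1 + T) * (K * (b:ℝ)) ^ μ') =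
            (c₁ / (C ^ (1 + T) * K ^ μ')) * (b:ℝ) ^ (-μ') := by
          rw [Real.mul_rpow hKpos.le hbpos.le, Real.rpow_neg hbpos.le]
          ring
        rw [e3]
        have hmin := min_le_right (1 / (2 * C * K ^ (μ' - 1))) (c₁ / (C ^ (1 + T) * K ^ μ'))
        have hbn : (0:ℝ) ≤ (b:ℝ) ^ (-μ') := by positivity
        rw [← hc₄def] at hmin
        nlinarith
      · -- distinct fractions
        have hnum : (a * (q' n : ℤ) - p' n * b : ℤ) ≠ 0 := by
          intro h0
          apply hcase
          have h0' : (a:ℝ) * (q' n : ℝ) = (p' n : ℝ) * (b:ℝ) := by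
            have h0'' := sub_eq_zero.mp h0
            exact_mod_cast h0''
          field_simp
          linarith
        have hgap : 1 / ((b:ℝ) * (q' n : ℝ)) ≤ |(a:ℝ)/(b:ℝ) - (p' n : ℝ)/(q' n : ℝ)| := by
          have h1' : (1:ℝ) ≤ |((a * (q' n : ℤ) - p' n * b : ℤ) : ℝ)| := by
            exact_mod_cast Int.one_le_abs hnum
          have heq : (a:ℝ)/(b:ℝ) - (p' n : ℝ)/(q' n : ℝ) =
              ((a * (q' n : ℤ) - p' n * b : ℤ) : ℝ) / ((b:ℝ) * (q' n : ℝ)) := by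
            push_cast
            field_simp
          rw [heq, abs_div, abs_of_pos (show (0:ℝ) < (b:ℝ) * (q' n : ℝ) by positivity)]
          gcongr
        have hfar : |α - (p' n : ℝ)/(q' n : ℝ)| ≤ 1 / (2 * (b:ℝ) * (q' n : ℝ)) := by
          refine (hb' n).2.trans ?_
          have e4 : c₂ * (q' n : ℝ) ^ (-(1 + τ n)) = c₂ / ((q' n : ℝ) * (q' n : ℝ) ^ (τ n)) := by
            rw [Real.rpow_neg hq'pos.le, ← div_eq_mul_inv]
            congr 1
            rw [Real.rpow_add hq'pos, Real.rpow_one]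
          rw [e4]
          calc c₂ / ((q' n : ℝ) * (q' n : ℝ) ^ (τ n))
              ≤ c₂ / ((q' n : ℝ) * (2 * c₂ * (b:ℝ))) := by
                apply div_le_div_of_nonneg_left hc₂.le (by positivity)
                have : (0:ℝ) < 2 * c₂ * (b:ℝ) := by positivity
                nlinarith
            _ = 1 / (2 * (b:ℝ) * (q' n : ℝ)) := by
                field_simp
        have hlow : 1 / (2 * (b:ℝ) * (q' n : ℝ)) ≤ |α - (a : ℝ) / (b : ℝ)| := by
          have htri : 1 / ((b:ℝ) * (q' n : ℝ)) ≤
              |α - (p' n : ℝ)/(q' n : ℝ)| + |α - (a : ℝ) / (b : ℝ)| := by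
            refine hgap.trans ?_
            have e5 : (a:ℝ)/(b:ℝ) - (p' n : ℝ)/(q' n : ℝ) =
                (α - (p' n : ℝ)/(q' n : ℝ)) - (α - (a : ℝ) / (b : ℝ)) := by ring
            rw [e5]
            exact (abs_sub _ _)
          have e6 : 1 / ((b:ℝ) * (q' n : ℝ)) =
              1 / (2 * (b:ℝ) * (q' n : ℝ)) + 1 / (2 * (b:ℝ) * (q' n : ℝ)) := by
            field_simp
            ring
          linarith
        refine le_trans ?_ hlow
        have hmin := min_le_left (1 / (2 * C * K ^ (μ' - 1))) (c₁ / (C ^ (1 + T) * K ^ μ'))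
        rw [← hc₄def] at hmin
        have hq2 : 2 * (b:ℝ) * (q' n : ℝ) ≤ 2 * C * K ^ (μ' - 1) * (b:ℝ) ^ μ' := by
          have h8 : (q' n : ℝ) ≤ C * K ^ (μ' - 1) * (b:ℝ) ^ (μ' - 1) := by
            have := hQ2a
            rw [Real.mul_rpow hKpos.le hbpos.le] at this
            linarith [this]
          have h9 : (b:ℝ) * (b:ℝ) ^ (μ' - 1) = (b:ℝ) ^ μ' := by
            nth_rewrite 1 [← Real.rpow_one (b:ℝ)]
            rw [← Real.rpow_add hbpos]
            ring_nf
          calc 2 * (b:ℝ) * (q' n : ℝ) ≤ 2 * (b:ℝ) * (C * K ^ (μ' - 1) * (b:ℝ) ^ (μ' - 1)) := by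
                have : (0:ℝ) ≤ 2 * (b:ℝ) := by positivity
                nlinarith
            _ = 2 * C * K ^ (μ' - 1) * ((b:ℝ) * (b:ℝ) ^ (μ' - 1)) := by ring
            _ = 2 * C * K ^ (μ' - 1) * (b:ℝ) ^ μ' := by rw [h9]
        have e7 : (1 / (2 * C * K ^ (μ' - 1))) * (b:ℝ) ^ (-μ') =
            1 / (2 * C * K ^ (μ' - 1) * (b:ℝ) ^ μ') := by
          rw [Real.rpow_neg hbpos.le]
          field_simp
        have e8 : 1 / (2 * C * K ^ (μ' - 1) * (b:ℝ) ^ μ') ≤ 1 / (2 * (b:ℝ) * (q' n : ℝ)) :=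
          one_div_le_one_div_of_le (by positivity) hq2
        have hbn : (0:ℝ) ≤ (b:ℝ) ^ (-μ') := by positivity
        calc c₄ * (b:ℝ) ^ (-μ') ≤ (1 / (2 * C * K ^ (μ' - 1))) * (b:ℝ) ^ (-μ') := by nlinarith
          _ = 1 / (2 * C * K ^ (μ' - 1) * (b:ℝ) ^ μ') := e7
          _ ≤ 1 / (2 * (b:ℝ) * (q' n : ℝ)) := e8
    -- contradiction
    have hlt : c₄ * (b:ℝ) ^ (-μ') < (b:ℝ) ^ (-μ) := lt_of_le_of_lt hbound hsol
    have hX : (0:ℝ) < (b:ℝ) ^ (-μ') := by positivity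
    have hY : (0:ℝ) < (b:ℝ) ^ (μ - μ') := by positivity
    have e9 : (b:ℝ) ^ (-μ) * (b:ℝ) ^ (μ - μ') = (b:ℝ) ^ (-μ') := by
      rw [← Real.rpow_add hbpos]
      ring_nf
    have h6 : c₄ * (b:ℝ) ^ (μ - μ') < 1 := by
      by_contra hcc
      push_neg at hcc
      nlinarith [mul_lt_mul_of_pos_right hlt hY]
    have e10 : c₄ * (1 / c₄ + 1) = 1 + c₄ := by
      rw [mul_add, mul_one_div, div_self hc₄.ne', mul_one]
    nlinarith [mul_le_mul_of_nonneg_left hx1 hc₄.le]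
  -- derive finiteness of the solution set, contradicting hinf
  set Qz : ℤ := max ⌈x₀⌉ 1 with hQzdef
  have hQz1 : (1:ℤ) ≤ Qz := le_max_right _ _
  have hQzR : (1:ℝ) ≤ (Qz:ℝ) := by exact_mod_cast hQz1
  set M : ℝ := (Qz:ℝ) ^ |μ| with hMdef
  have hM0 : 0 ≤ M := by positivity
  set Breal : ℝ := (Qz:ℝ) * (|α| + M) with hBrealdef
  set B : ℤ := max ⌈Breal⌉ 0 with hBdef
  apply hinf
  apply Set.Finite.subset (Set.finite_Icc ((-B, 1) : ℤ × ℤ) ((B, Qz) : ℤ × ℤ))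
  rintro ⟨a, b⟩ ⟨hbpos, hab⟩
  simp only [Set.mem_Icc, Prod.mk_le_mk]
  have hbQ : b ≤ Qz := by
    by_contra hcc
    push_neg at hcc
    have hx : x₀ ≤ (b:ℝ) := by
      have h10 : ⌈x₀⌉ < b := lt_of_le_of_lt (le_max_left _ _) hcc
      calc x₀ ≤ (⌈x₀⌉ : ℝ) := Int.le_ceil x₀
        _ ≤ (b:ℝ) := by exact_mod_cast h10.le
    exact key a b hbpos hx hab
  have hb1 : (1:ℝ) ≤ (b:ℝ) := by exact_mod_cast hbpos
  have hbQr : (b:ℝ) ≤ (Qz:ℝ) := by exact_mod_cast hbQ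
  have hMb : (b:ℝ) ^ (-μ) ≤ M := by
    calc (b:ℝ) ^ (-μ) ≤ (b:ℝ) ^ |μ| := Real.rpow_le_rpow_of_exponent_le hb1 (neg_le_abs μ)
      _ ≤ (Qz:ℝ) ^ |μ| := Real.rpow_le_rpow (by linarith) hbQr (abs_nonneg μ)
  have hfrac : |(a:ℝ)/(b:ℝ)| ≤ |α| + M := by
    have h11 := abs_le.mp (le_of_lt (lt_of_lt_of_le hab hMb))
    refine abs_le.mpr ⟨?_, ?_⟩
    · have := neg_abs_le α
      linarith [h11.2]
    · have := le_abs_self α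
      linarith [h11.1]
  have haq : |(a:ℝ)| ≤ Breal := by
    have hbp : (0:ℝ) < (b:ℝ) := by linarith
    have e10 : |(a:ℝ)| = |(a:ℝ)/(b:ℝ)| * (b:ℝ) := by
      rw [abs_div, abs_of_pos hbp]
      field_simp
    rw [e10, hBrealdef]
    calc |(a:ℝ)/(b:ℝ)| * (b:ℝ) ≤ (|α| + M) * (Qz:ℝ) := by
          apply mul_le_mul hfrac hbQr (by linarith) (by positivity)
      _ = (Qz:ℝ) * (|α| + M) := by ring
  have haB : |a| ≤ B := by
    have h12 : (|a| : ℝ) ≤ (B : ℝ) := by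
      push_cast
      calc |(a:ℝ)| ≤ Breal := haq
        _ ≤ (⌈Breal⌉ : ℝ) := Int.le_ceil _
        _ ≤ ((max ⌈Breal⌉ 0 : ℤ) : ℝ) := by exact_mod_cast le_max_left _ _
    exact_mod_cast h12
  exact ⟨⟨(abs_le.mp haB).1, hbpos⟩, ⟨(abs_le.mp haB).2, hbQ⟩⟩
end
end

section
/- For positive integers n and d, let r(d, n) be the largest divisor of d coprime to n and s(d, n) = d / r(d, n). Then Φ_n(z^d) = ∏_{r | r(d,n)} Φ_{r · n · s(d,n)}(z), where Φ_k denotes the k-th cyclotomic polynomial. -/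
noncomputable section
open Polynomial

/-- r(d, n): the largest divisor of d coprime to n. -/
def rpart (d n : ℕ) : ℕ := sSup {r : ℕ | r ∣ d ∧ Nat.Coprime r n}

/-- s(d, n) = d / r(d, n): the part of d built from primes dividing n. -/
def spart (d n : ℕ) : ℕ := d / rpart d n

/-! Write `Φ_n(X^d) = expand d Φ_n` and `d = r s` with `r = r(d, n)`, `s = s(d, n)`, so that
`expand d = expand r ∘ expand s`. Expanding `Φ_m` by a prime `p ∣ m` gives `Φ_{mp}`, hence expanding
`Φ_n` by `s` gives `Φ_{ns}`. Expanding `Φ_m` by a prime `p ∤ m` gives `Φ_{mp} Φ_m`; iterating over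
prime powers and multiplying over coprime factors, expansion by `r`, which is coprime to `ns`, gives
`∏_{e ∣ r} Φ_{nse}`. -/

namespace Nat.Coprime

theorem prod_divisors_mul {M : Type*} [CommMonoid M] {m n : ℕ} (hmn : m.Coprime n)
    (f : ℕ → M) :
    ∏ k ∈ (m * n).divisors, f k = ∏ a ∈ m.divisors, ∏ b ∈ n.divisors, f (a * b) := by
  rw [hmn.divisors_mul, Finset.prod_map, ← Finset.prod_product']
  exact Finset.prod_attach _ (fun p : ℕ × ℕ => f (p.1 * p.2))

end Nat.Coprime

namespace Polynomial

variable (R : Type*) [CommRing R]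

theorem expand_cyclotomic_of_forall_prime_dvd {s n : ℕ}
    (hs : ∀ p : ℕ, p.Prime → p ∣ s → p ∣ n) :
    expand R s (cyclotomic n R) = cyclotomic (n * s) R := by
  induction s using induction_on_primes with
  | zero =>
    obtain ⟨p, hnp, hp⟩ := Nat.exists_infinite_primes (n + 1)
    obtain rfl : n = 0 := Nat.eq_zero_of_dvd_of_lt (hs p hp (dvd_zero p)) (by omega)
    simp
  | one => simp
  | prime_mul p a hp ih =>
    have ha : ∀ q : ℕ, q.Prime → q ∣ a → q ∣ n := fun q hq hqa => hs q hq (hqa.mul_left p)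
    rw [expand_mul, ih ha,
      cyclotomic_expand_eq_cyclotomic hp ((hs p hp (dvd_mul_right p a)).mul_right a), mul_assoc,
      mul_comm a]

theorem expand_prime_pow_cyclotomic {p n : ℕ} (hp : p.Prime) (hpn : ¬p ∣ n) (k : ℕ) :
    expand R (p ^ k) (cyclotomic n R) = ∏ i ∈ Finset.range (k + 1), cyclotomic (n * p ^ i) R := by
  induction k with
  | zero => simp
  | succ k ih =>
    have hpk : ∀ q : ℕ, q.Prime → q ∣ p ^ k → q ∣ n * p := fun q hq hqp =>
      ((Nat.prime_dvd_prime_iff_eq hq hp).1 (hq.dvd_of_dvd_pow hqp)) ▸ dvd_mul_left q n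
    rw [pow_succ, expand_mul, cyclotomic_expand_eq_cyclotomic_mul hp hpn, map_mul, ih,
      expand_cyclotomic_of_forall_prime_dvd R hpk, Finset.prod_range_succ _ (k + 1), mul_assoc,
      ← pow_succ', mul_comm]

theorem expand_cyclotomic_of_coprime {r : ℕ} (hr : r ≠ 0) {n : ℕ} (hrn : r.Coprime n) :
    expand R r (cyclotomic n R) = ∏ e ∈ r.divisors, cyclotomic (n * e) R := by
  induction r using Nat.recOnPosPrimePosCoprime generalizing n with
  | zero => exact absurd rfl hr
  | one => simp
  | prime_pow p k hp hk =>
    rw [Nat.prod_divisors_prime_pow hp,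
      expand_prime_pow_cyclotomic R hp ((hp.coprime_iff_not_dvd).1
        (Nat.Coprime.coprime_dvd_left (dvd_pow_self p hk.ne') hrn))]
  | coprime a b ha hb hab iha ihb =>
    rw [expand_mul, ihb (by omega) (Nat.Coprime.coprime_mul_left hrn), map_prod,
      hab.prod_divisors_mul, Finset.prod_comm]
    refine Finset.prod_congr rfl fun e he => ?_
    have hane : a.Coprime (n * e) := (Nat.Coprime.coprime_mul_right hrn).mul_right
      (hab.coprime_dvd_right (Nat.dvd_of_mem_divisors he))
    rw [iha (by omega) hane]
    simp only [mul_assoc, mul_comm e]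

end Polynomial

section RPart

variable {d n : ℕ}

theorem rpart_dvd_and_coprime (hd : d ≠ 0) : rpart d n ∣ d ∧ (rpart d n).Coprime n :=
  Nat.sSup_mem (s := {r : ℕ | r ∣ d ∧ r.Coprime n}) ⟨1, one_dvd d, Nat.coprime_one_left n⟩
    ⟨d, fun _ hr => Nat.le_of_dvd (Nat.pos_of_ne_zero hd) hr.1⟩

theorem le_rpart (hd : d ≠ 0) {r : ℕ} (hrd : r ∣ d) (hrn : r.Coprime n) : r ≤ rpart d n :=
  le_csSup ⟨d, fun _ hr => Nat.le_of_dvd (Nat.pos_of_ne_zero hd) hr.1⟩ ⟨hrd, hrn⟩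

theorem rpart_ne_zero (hd : d ≠ 0) : rpart d n ≠ 0 :=
  ne_zero_of_dvd_ne_zero hd (rpart_dvd_and_coprime hd).1

theorem rpart_mul_spart (hd : d ≠ 0) : rpart d n * spart d n = d :=
  Nat.mul_div_cancel' (rpart_dvd_and_coprime hd).1

theorem Nat.Prime.dvd_of_dvd_spart (hd : d ≠ 0) {p : ℕ} (hp : p.Prime) (hpS : p ∣ spart d n) :
    p ∣ n := by
  have hRn := (rpart_dvd_and_coprime (n := n) hd).2
  by_contra hpn
  have hRp : rpart d n * p ≤ rpart d n := by
    refine le_rpart hd ?_ (hRn.mul_left ((hp.coprime_iff_not_dvd).2 hpn))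
    simpa only [rpart_mul_spart hd] using mul_dvd_mul_left (rpart d n) hpS
  have hR : 0 < rpart d n := Nat.pos_of_ne_zero (rpart_ne_zero hd)
  nlinarith [hp.two_le]

theorem rpart_coprime_mul_spart (hd : d ≠ 0) : (rpart d n).Coprime (n * spart d n) :=
  Nat.coprime_of_dvd fun p hp hpR hpnS => by
    have hpn : p ∣ n := ((hp.dvd_mul).1 hpnS).elim id (hp.dvd_of_dvd_spart hd)
    exact (hp.coprime_iff_not_dvd.1
      ((rpart_dvd_and_coprime hd).2.coprime_dvd_left hpR)) hpn

end RPart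

theorem cyclotomic_comp_pow_general (n d : ℕ) (hd : 0 < d) :
    (Polynomial.cyclotomic n ℚ).comp (Polynomial.X ^ d) =
      ∏ r ∈ (rpart d n).divisors, Polynomial.cyclotomic (r * n * spart d n) ℚ := by
  have hd0 : d ≠ 0 := hd.ne'
  rw [← expand_eq_comp_X_pow]
  nth_rw 1 [← rpart_mul_spart (n := n) hd0]
  rw [expand_mul,
    expand_cyclotomic_of_forall_prime_dvd ℚ fun p hp => hp.dvd_of_dvd_spart hd0,
    expand_cyclotomic_of_coprime ℚ (rpart_ne_zero hd0) (rpart_coprime_mul_spart hd0)]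
  simp only [mul_comm, mul_left_comm]

/-- Φ_n(z^d) = ∏_{r ∣ r(d,n)} Φ_{r·n·s(d,n)}(z), where Φ_k is the
k-th cyclotomic polynomial. -/
theorem cyclotomic_comp_pow (n d : ℕ) (hn : 0 < n) (hd : 0 < d) :
    (Polynomial.cyclotomic n ℚ).comp (Polynomial.X ^ d) =
      ∏ r ∈ (rpart d n).divisors, Polynomial.cyclotomic (r * n * spart d n) ℚ :=
  cyclotomic_comp_pow_general n d hd
end
end
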